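/- arXiv:2207.08572 — 4 statements merged into one kernel-verified Lean document; each statement's English description precedes it below -/
import Mathlib

section
/- (Strong Compactness) Let E, E₁, …, Eₙ be EQ-formulas over L. For equational formulas F, F' write F ≼ F' iff F → F' is true in every model of FEA(L), F ≈ F' iff F ↔ F' is true in every model of FEA(L), and F ≺ F' iff F ≼ F' and not F ≈ F'. Then: (1) if Eᵢ ≺ E for all i = 1,…,n, then E₁ ∨ … ∨ Eₙ ≺ E; (2) if E ≈ E₁ ∨ … ∨ Eₙ, then E ≈ Eⱼ for some j; (3) if E ≼ E₁ ∨ … ∨ Eₙ, then E ≼ Eⱼ for some j. -/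
/-- A first-order language: function symbols with arities and predicate
symbols with arities.  Variables are natural numbers. -/
structure FOLang where
  Func : Type
  farity : Func → ℕ
  Pred : Type
  parity : Pred → ℕ

/-- The language has at least one constant. -/
def FOLang.HasConst (L : FOLang) : Prop := ∃ f : L.Func, L.farity f = 0

/-- Terms over a language. -/
inductive FOTerm (L : FOLang) : Type where
  | var : ℕ → FOTerm L
  | func : (f : L.Func) → (Fin (L.farity f) → FOTerm L) → FOTerm L

namespace FOTerm

variable {L : FOLang}

/-- The (finite) set of variables occurring in a term. -/
def vars : FOTerm L → Finset ℕ
  | .var x => {x}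
  | .func _ ts => Finset.univ.biUnion fun i => (ts i).vars

/-- Application of a (total) substitution to a term: simultaneously replace
every variable `x` by the term `f x`. -/
def applyT (f : ℕ → FOTerm L) : FOTerm L → FOTerm L
  | .var x => f x
  | .func g ts => .func g fun i => (ts i).applyT f

end FOTerm

/-- A pre-interpretation: a non-empty universe together with an
interpretation of the function symbols. -/
structure FOStruc (L : FOLang) where
  carrier : Type
  inhab : Nonempty carrier
  funcs : (f : L.Func) → (Fin (L.farity f) → carrier) → carrier

/-- Evaluation of a term under a valuation. -/
def FOTerm.eval {L : FOLang} (M : FOStruc L) (h : ℕ → M.carrier) : FOTerm L → M.carrier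
  | .var x => h x
  | .func f ts => M.funcs f fun i => (ts i).eval M h

/-- The set of `M`-instances of a term: values of the term under all
valuations. -/
def InstT {L : FOLang} (M : FOStruc L) (t : FOTerm L) : Set M.carrier :=
  { a | ∃ h : ℕ → M.carrier, t.eval M h = a }

/-- `M` is a model of the free equality axioms `FEA(L)`. -/
structure IsFEA {L : FOLang} (M : FOStruc L) : Prop where
  inj : ∀ f : L.Func, Function.Injective (M.funcs f)
  disj : ∀ f g : L.Func, f ≠ g → ∀ a b, M.funcs f a ≠ M.funcs g b
  occ : ∀ (x : ℕ) (t : FOTerm L), t ≠ .var x → x ∈ t.vars →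
      ∀ h : ℕ → M.carrier, h x ≠ t.eval M h

/-- The domain has at least two elements. -/
def FOStruc.Nontriv {L : FOLang} (M : FOStruc L) : Prop :=
  ∃ a b : M.carrier, a ≠ b

/-- The difference set `Diff(s,t)`: `InDiff s t (s',t')` means the pair
`(s',t')` belongs to `Diff(s,t)`. -/
inductive InDiff {L : FOLang} : FOTerm L → FOTerm L → FOTerm L × FOTerm L → Prop where
  | var (x : ℕ) : InDiff (.var x) (.var x) (.var x, .var x)
  | varVar {x y : ℕ} : x ≠ y → InDiff (.var x) (.var y) (.var x, .var y)
  | varFunc (x : ℕ) (f : L.Func) (ts : Fin (L.farity f) → FOTerm L) :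
      InDiff (.var x) (.func f ts) (.var x, .func f ts)
  | funcVar (f : L.Func) (ss : Fin (L.farity f) → FOTerm L) (y : ℕ) :
      InDiff (.func f ss) (.var y) (.func f ss, .var y)
  | funcFunc {f g : L.Func} (ss : Fin (L.farity f) → FOTerm L)
      (ts : Fin (L.farity g) → FOTerm L) : f ≠ g →
      InDiff (.func f ss) (.func g ts) (.func f ss, .func g ts)
  | func {f : L.Func} (ss ts : Fin (L.farity f) → FOTerm L) (i : Fin (L.farity f))
      {p : FOTerm L × FOTerm L} :
      InDiff (ss i) (ts i) p → InDiff (.func f ss) (.func f ts) p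
/-- An interpretation: a pre-interpretation together with an interpretation
of the predicate symbols. -/
structure FOInterp (L : FOLang) extends FOStruc L where
  preds : (p : L.Pred) → (Fin (L.parity p) → carrier) → Prop

/-- First-order formulas. -/
inductive FOForm (L : FOLang) : Type where
  | tru : FOForm L
  | fal : FOForm L
  | eq : FOTerm L → FOTerm L → FOForm L
  | atom : (p : L.Pred) → (Fin (L.parity p) → FOTerm L) → FOForm L
  | not : FOForm L → FOForm L
  | and : FOForm L → FOForm L → FOForm L
  | or : FOForm L → FOForm L → FOForm L
  | imp : FOForm L → FOForm L → FOForm L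
  | iff : FOForm L → FOForm L → FOForm L
  | ex : ℕ → FOForm L → FOForm L
  | all : ℕ → FOForm L → FOForm L

namespace FOForm

variable {L : FOLang}

/-- Tarskian satisfaction of a formula in an interpretation under a valuation. -/
def Sat (I : FOInterp L) (h : ℕ → I.carrier) : FOForm L → Prop
  | .tru => True
  | .fal => False
  | .eq s t => s.eval I.toFOStruc h = t.eval I.toFOStruc h
  | .atom p ts => I.preds p fun i => (ts i).eval I.toFOStruc h
  | .not F => ¬ F.Sat I h
  | .and F G => F.Sat I h ∧ G.Sat I h
  | .or F G => F.Sat I h ∨ G.Sat I h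
  | .imp F G => F.Sat I h → G.Sat I h
  | .iff F G => F.Sat I h ↔ G.Sat I h
  | .ex x F => ∃ d : I.carrier, F.Sat I (Function.update h x d)
  | .all x F => ∀ d : I.carrier, F.Sat I (Function.update h x d)

/-- Free variables of a formula. -/
def fv : FOForm L → Finset ℕ
  | .tru => ∅
  | .fal => ∅
  | .eq s t => s.vars ∪ t.vars
  | .atom _ ts => Finset.univ.biUnion fun i => (ts i).vars
  | .not F => F.fv
  | .and F G => F.fv ∪ G.fv
  | .or F G => F.fv ∪ G.fv
  | .imp F G => F.fv ∪ G.fv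
  | .iff F G => F.fv ∪ G.fv
  | .ex x F => F.fv.erase x
  | .all x F => F.fv.erase x

end FOForm

/-- The interpretation obtained from a pre-interpretation by interpreting
every predicate symbol as the empty relation (for formulas without atoms
the choice is irrelevant). -/
def FOStruc.toInterp {L : FOLang} (M : FOStruc L) : FOInterp L :=
  { toFOStruc := M, preds := fun _ _ => False }

/-- Satisfaction of an (equational) formula in a pre-interpretation. -/
def ESat {L : FOLang} (M : FOStruc L) (h : ℕ → M.carrier) (F : FOForm L) : Prop :=
  F.Sat M.toInterp h

/-- The set of solutions of a formula in a pre-interpretation. -/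
def SolE {L : FOLang} (M : FOStruc L) (F : FOForm L) : Set (ℕ → M.carrier) :=
  { h | ESat M h F }

/-- EQ-formulas: built from `True`, `False` and equations using `∧` and `∃`. -/
inductive IsEQ {L : FOLang} : FOForm L → Prop where
  | tru : IsEQ .tru
  | fal : IsEQ .fal
  | eq (s t : FOTerm L) : IsEQ (.eq s t)
  | and {F G : FOForm L} : IsEQ F → IsEQ G → IsEQ (.and F G)
  | ex (x : ℕ) {F : FOForm L} : IsEQ F → IsEQ (.ex x F)

/-- Equational formulas: first-order formulas with no atoms other than
equations. -/
inductive IsEquational {L : FOLang} : FOForm L → Prop where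
  | tru : IsEquational .tru
  | fal : IsEquational .fal
  | eq (s t : FOTerm L) : IsEquational (.eq s t)
  | not {F : FOForm L} : IsEquational F → IsEquational (.not F)
  | and {F G : FOForm L} : IsEquational F → IsEquational G → IsEquational (.and F G)
  | or {F G : FOForm L} : IsEquational F → IsEquational G → IsEquational (.or F G)
  | imp {F G : FOForm L} : IsEquational F → IsEquational G → IsEquational (.imp F G)
  | iff {F G : FOForm L} : IsEquational F → IsEquational G → IsEquational (.iff F G)
  | ex (x : ℕ) {F : FOForm L} : IsEquational F → IsEquational (.ex x F)
  | all (x : ℕ) {F : FOForm L} : IsEquational F → IsEquational (.all x F)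

/-- `F ≼ F'` : `F → F'` is true in every model of `FEA(L)`. -/
def EQle {L : FOLang} (F F' : FOForm L) : Prop :=
  ∀ M : FOStruc L, IsFEA M → ∀ h : ℕ → M.carrier, ESat M h F → ESat M h F'

/-- `F ≈ F'` : `F ↔ F'` is true in every model of `FEA(L)`. -/
def EQequiv {L : FOLang} (F F' : FOForm L) : Prop := EQle F F' ∧ EQle F' F

/-- `F ≺ F'`. -/
def EQlt {L : FOLang} (F F' : FOForm L) : Prop := EQle F F' ∧ ¬ EQequiv F F'

/-- The conjunction `x₁ = s₁ ∧ … ∧ xₙ = sₙ`. -/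
def conjOf {L : FOLang} : List (ℕ × FOTerm L) → FOForm L
  | [] => .tru
  | [p] => .eq (.var p.1) p.2
  | p :: rest => .and (.eq (.var p.1) p.2) (conjOf rest)

/-- The formula `(∃ z₁) … (∃ z_k) F`. -/
def exOf {L : FOLang} (zs : List ℕ) (F : FOForm L) : FOForm L :=
  zs.foldr .ex F

/-- The disjunction `F₁ ∨ … ∨ Fₙ`. -/
def disjOf {L : FOLang} : List (FOForm L) → FOForm L
  | [] => .fal
  | [F] => F
  | F :: rest => .or F (disjOf rest)

/-- A formula is in solved form if it is `True`, `False`, or of the shape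
`∃ z₁ … ∃ z_k (x₁ = s₁ ∧ … ∧ xₙ = sₙ)` where the `xᵢ` and `z_j` are
pairwise distinct, no `xᵢ` occurs in any right-hand side, every `z_j`
occurs in the conjunction, and no `sᵢ` is one of the `z_j`. -/
def SolvedForm {L : FOLang} (F : FOForm L) : Prop :=
  F = .tru ∨ F = .fal ∨
    ∃ (zs : List ℕ) (eqs : List (ℕ × FOTerm L)),
      eqs ≠ [] ∧
      F = exOf zs (conjOf eqs) ∧
      (eqs.map Prod.fst ++ zs).Nodup ∧
      (∀ p ∈ eqs, ∀ q ∈ eqs, p.1 ∉ q.2.vars) ∧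
      (∀ z ∈ zs, ∃ p ∈ eqs, z ∈ p.2.vars) ∧
      (∀ z ∈ zs, ∀ p ∈ eqs, p.2 ≠ .var z)

/-- The projection of an EQ-formula onto a finite set of variables:
existentially quantify the free variables not in `X`; the projection of
`False` is `False`. -/
def projE {L : FOLang} (E : FOForm L) (X : Finset ℕ) : FOForm L :=
  match E with
  | .fal => .fal
  | E => exOf ((E.fv \ X).sort (· ≤ ·)) E

/-- The universal closure of a formula. -/
def univClosure {L : FOLang} (F : FOForm L) : FOForm L :=
  (F.fv.sort (· ≤ ·)).foldr .all F

/-- A formula is valid if it is true in every interpretation (under every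
valuation). -/
def FOValid {L : FOLang} (F : FOForm L) : Prop :=
  ∀ (I : FOInterp L) (h : ℕ → I.carrier), F.Sat I h

/-- An EQ-formula is consistent if it has a solution in some model of the
free equality axioms. -/
def EQConsistent {L : FOLang} (E : FOForm L) : Prop :=
  ∃ M : FOStruc L, IsFEA M ∧ ∃ h : ℕ → M.carrier, ESat M h E
/-- Ground terms: terms with no variables. -/
def GroundTerm (L : FOLang) : Type := { t : FOTerm L // t.vars = ∅ }

/-- The Herbrand pre-interpretation: its domain is the set of ground terms
and function symbols are interpreted formally. -/
def Herbrand (L : FOLang) (hc : L.HasConst) : FOStruc L where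
  carrier := GroundTerm L
  inhab := by
    obtain ⟨f, hf⟩ := hc
    refine ⟨⟨.func f (fun i => Fin.elim0 (Fin.cast hf i)), ?_⟩⟩
    ext x
    simp only [FOTerm.vars, Finset.mem_biUnion, Finset.mem_univ, true_and,
      Finset.notMem_empty, iff_false, not_exists]
    intro i
    exact Fin.elim0 (Fin.cast hf i)
  funcs := fun f ts => ⟨.func f (fun i => (ts i).1), by
    ext x
    simp only [FOTerm.vars, Finset.mem_biUnion, Finset.mem_univ, true_and,
      Finset.notMem_empty, iff_false, not_exists]
    intro i hx
    rw [(ts i).2] at hx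
    exact Finset.notMem_empty x hx⟩

/-- The language obtained by adding a countably infinite set of new
constants. -/
def addConsts (L : FOLang) : FOLang where
  Func := L.Func ⊕ ℕ
  farity := Sum.elim L.farity fun _ => 0
  Pred := L.Pred
  parity := L.parity

/-- The canonical embedding of terms into the extended language. -/
def FOTerm.lift {L : FOLang} : FOTerm L → FOTerm (addConsts L)
  | .var x => .var x
  | .func f ts => .func (Sum.inl f) fun i => (ts i).lift

/-- The canonical embedding of formulas into the extended language. -/
def FOForm.lift {L : FOLang} : FOForm L → FOForm (addConsts L)
  | .tru => .tru
  | .fal => .fal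
  | .eq s t => .eq s.lift t.lift
  | .atom p ts => .atom p fun i => (ts i).lift
  | .not F => .not F.lift
  | .and F G => .and F.lift G.lift
  | .or F G => .or F.lift G.lift
  | .imp F G => .imp F.lift G.lift
  | .iff F G => .iff F.lift G.lift
  | .ex x F => .ex x F.lift
  | .all x F => .all x F.lift
/-- A finite substitution: a finite set of variables (its domain) together
with an assignment of terms to variables which is the identity outside the
domain. -/
structure FinSubst (L : FOLang) where
  dom : Finset ℕ
  map : ℕ → FOTerm L
  outside : ∀ x ∉ dom, map x = .var x

namespace FinSubst

variable {L : FOLang}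

/-- `Range(σ)`: the set of variables occurring in the terms `σ x`, `x ∈ Dom(σ)`. -/
def range (σ : FinSubst L) : Finset ℕ :=
  σ.dom.biUnion fun x => (σ.map x).vars

/-- `θ` is an extension of `σ`. -/
def Extends (θ σ : FinSubst L) : Prop :=
  σ.dom ⊆ θ.dom ∧ ∀ x ∈ σ.dom, θ.map x = σ.map x

/-- `θ` is a regular extension of `σ`: it extends `σ` and maps
`Dom(θ) \ Dom(σ)` injectively into the variables not in `Range(σ)`. -/
def RegExt (θ σ : FinSubst L) : Prop :=
  Extends θ σ ∧
  (∀ x ∈ θ.dom, x ∉ σ.dom → ∃ y : ℕ, y ∉ σ.range ∧ θ.map x = .var y) ∧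
  Set.InjOn θ.map ↑(θ.dom \ σ.dom)

/-- The set of `M`-instances of a substitution. -/
def Inst {L : FOLang} (M : FOStruc L) (σ : FinSubst L) : Set (ℕ → M.carrier) :=
  { h | ∃ g : ℕ → M.carrier, ∀ x ∈ σ.dom, h x = (σ.map x).eval M g }

open Classical in
/-- The restriction of `σ` to `Dom(σ) ∩ X`. -/
noncomputable def restrict (σ : FinSubst L) (X : Set ℕ) : FinSubst L where
  dom := σ.dom.filter fun x => x ∈ X
  map := fun x => if x ∈ σ.dom ∧ x ∈ X then σ.map x else .var x
  outside := fun x hx => if_neg fun h => hx (Finset.mem_filter.2 ⟨h.1, h.2⟩)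

/-- The composition `σθ`, defined on `Dom(σ)` by `x ↦ (σ x)θ`. -/
def comp (σ θ : FinSubst L) : FinSubst L where
  dom := σ.dom
  map := fun x => if x ∈ σ.dom then (σ.map x).applyT θ.map else .var x
  outside := fun _ hx => if_neg hx

/-- `σ ≼ θ` : `θ` is more general than `σ`. -/
def Le (σ θ : FinSubst L) : Prop :=
  ∃ σ' θ' τ : FinSubst L,
    RegExt σ' σ ∧ RegExt θ' θ ∧ σ'.dom = θ'.dom ∧
    θ'.range ⊆ τ.dom ∧ σ' = θ'.comp τ

/-- `σ ≈ θ`. -/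
def Equiv (σ θ : FinSubst L) : Prop := Le σ θ ∧ Le θ σ

/-- A permutation: a substitution mapping its domain injectively to
variables. -/
def IsPerm (τ : FinSubst L) : Prop :=
  (∀ x ∈ τ.dom, ∃ y : ℕ, τ.map x = .var y) ∧ Set.InjOn τ.map ↑τ.dom

/-- The empty substitution. -/
def empty (L : FOLang) : FinSubst L where
  dom := ∅
  map := fun x => .var x
  outside := fun _ _ => rfl

/-- The kernel of a substitution: the intersection of all sets `X` of
variables such that `σ↾X ≈ σ`. -/
def kernel (σ : FinSubst L) : Set ℕ :=
  ⋂₀ { X : Set ℕ | Equiv (σ.restrict X) σ }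

end FinSubst

noncomputable section

theorem exists_notin_finset (s : Finset ℕ) : ∃ n : ℕ, n ∉ s :=
  ⟨s.sup id + 1, fun h => by
    have := Finset.le_sup (f := id) h
    simp only [id] at this
    omega⟩

/-- The first variable not belonging to a given finite set of variables. -/
def freshVar (s : Finset ℕ) : ℕ := Nat.find (exists_notin_finset s)

/-- Insert a binding into a substitution. -/
def FinSubst.insertB {L : FOLang} (σ : FinSubst L) (x : ℕ) (t : FOTerm L) :
    FinSubst L where
  dom := insert x σ.dom
  map := Function.update σ.map x t
  outside := by
    intro z hz
    have hzx : z ≠ x := fun h => hz (h ▸ Finset.mem_insert_self x σ.dom)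
    have hzd : z ∉ σ.dom := fun h => hz (Finset.mem_insert_of_mem h)
    rw [Function.update_of_ne hzx]
    exact σ.outside z hzd

/-- One step of the regular-extension procedure: extend the substitution
with a binding for `x` (to itself if possible, otherwise to the first
variable not occurring in the range). -/
def regStep {L : FOLang} (acc : FinSubst L) (x : ℕ) : FinSubst L :=
  if x ∈ acc.dom then acc
  else acc.insertB x (.var (if x ∈ acc.range then freshVar acc.range else x))

/-- Restrict `σ` to the free variables of `F` and extend the result
regularly to a substitution whose domain is exactly `fv F`. -/
def FinSubst.extendFV {L : FOLang} (σ : FinSubst L) (F : FOForm L) : FinSubst L :=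
  (F.fv.sort (· ≤ ·)).foldl regStep (σ.restrict ↑F.fv)

/-- Capture-avoiding simultaneous substitution on formulas (bound variables
are renamed as needed). -/
def FOForm.applyF {L : FOLang} (f : ℕ → FOTerm L) : FOForm L → FOForm L
  | .tru => .tru
  | .fal => .fal
  | .eq s t => .eq (s.applyT f) (t.applyT f)
  | .atom p ts => .atom p fun i => (ts i).applyT f
  | .not F => .not (F.applyF f)
  | .and F G => .and (F.applyF f) (G.applyF f)
  | .or F G => .or (F.applyF f) (G.applyF f)
  | .imp F G => .imp (F.applyF f) (G.applyF f)
  | .iff F G => .iff (F.applyF f) (G.applyF f)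
  | .ex x G =>
      let R : Finset ℕ := (G.fv.erase x).biUnion fun z => (f z).vars
      let y : ℕ := if x ∈ R then freshVar R else x
      .ex y (G.applyF (Function.update f x (.var y)))
  | .all x G =>
      let R : Finset ℕ := (G.fv.erase x).biUnion fun z => (f z).vars
      let y : ℕ := if x ∈ R then freshVar R else x
      .all y (G.applyF (Function.update f x (.var y)))

/-- The application `Fσ` of a finite substitution to a formula: restrict
`σ` to the free variables of `F`, extend regularly to all of `fv F`, and
substitute capture-avoidingly. -/
def FOForm.applyS {L : FOLang} (σ : FinSubst L) (F : FOForm L) : FOForm L :=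
  F.applyF (σ.extendFV F).map

end
/-- The set of finite substitutions together with an added bottom element
`⊥` (represented by `none`): the extended preorder. -/
def LeBot {L : FOLang} : Option (FinSubst L) → Option (FinSubst L) → Prop
  | none, _ => True
  | some _, none => False
  | some σ, some θ => FinSubst.Le σ θ

/-- The induced equivalence on `Subst⊥`. -/
def EquivBot {L : FOLang} (a b : Option (FinSubst L)) : Prop :=
  LeBot a b ∧ LeBot b a

/-- The quotient of `Subst⊥` by `≈`. -/
def SubstQuot (L : FOLang) : Type := Quot (EquivBot (L := L))

/-- The induced partial order on the quotient `Subst⊥/≈`. -/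
def SubstQuotLe {L : FOLang} (a b : SubstQuot L) : Prop :=
  ∃ s t : Option (FinSubst L), Quot.mk _ s = a ∧ Quot.mk _ t = b ∧ LeBot s t

/-- EQ-formulas as a subtype. -/
def EQSub (L : FOLang) : Type := { F : FOForm L // IsEQ F }

/-- The quotient of the set of EQ-formulas by `≈`. -/
def EQQuot (L : FOLang) : Type :=
  Quot (fun a b : EQSub L => EQequiv a.1 b.1)

/-- The induced partial order on the quotient of EQ-formulas. -/
def EQQuotLe {L : FOLang} (a b : EQQuot L) : Prop :=
  ∃ E E' : EQSub L, Quot.mk _ E = a ∧ Quot.mk _ E' = b ∧ EQle E.1 E'.1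

/-- The substitution `{x₁↦s₁, …, xₙ↦sₙ, y₁↦y₁, …, y_k↦y_k}` associated
with a solved form with equations `eqs` and parameters `params`. -/
theorem lookup_eq_none_of_not_mem {L : FOLang} (x : ℕ) :
    ∀ eqs : List (ℕ × FOTerm L), x ∉ eqs.map Prod.fst → eqs.lookup x = none := by
  intro eqs
  induction eqs with
  | nil => intro _; rfl
  | cons p rest ih =>
    intro hx1
    have hp : p.1 ≠ x := by
      intro h
      exact hx1 (by simp [h])
    have hr : x ∉ rest.map Prod.fst := fun h => hx1 (by simp [h])
    have hxp : (x == p.1) = false := beq_eq_false_iff_ne.mpr fun h => hp h.symm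
    simp only [List.lookup, hxp]
    exact ih hr

def solvedSubst {L : FOLang} (eqs : List (ℕ × FOTerm L)) (params : Finset ℕ) :
    FinSubst L where
  dom := (eqs.map Prod.fst).toFinset ∪ params
  map := fun x => (eqs.lookup x).getD (.var x)
  outside := by
    intro x hx
    have hx1 : x ∉ eqs.map Prod.fst := fun h =>
      hx (Finset.mem_union_left _ (List.mem_toFinset.2 h))
    simp [lookup_eq_none_of_not_mem x eqs hx1]
section ProdAux

variable {L : FOLang} {ι : Type} (M : ι → FOStruc L)

/-- Direct product of pre-interpretations. -/
def prodStruc : FOStruc L where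
  carrier := ∀ i, (M i).carrier
  inhab := ⟨fun i => Classical.choice (M i).inhab⟩
  funcs := fun f ts i => (M i).funcs f fun k => ts k i

lemma prod_eval (h : ℕ → (prodStruc M).carrier) (t : FOTerm L) (i : ι) :
    t.eval (prodStruc M) h i = t.eval (M i) (fun x => h x i) := by
  induction t with
  | var x => rfl
  | func f ts ih =>
    show (M i).funcs f (fun k => (ts k).eval (prodStruc M) h i) = _
    exact congrArg _ (funext fun k => ih k)

lemma update_comp (h : ℕ → (prodStruc M).carrier) (x : ℕ)
    (d : (prodStruc M).carrier) (i : ι) :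
    (fun y => Function.update h x d y i) = Function.update (fun y => h y i) x (d i) := by
  funext y
  by_cases hy : y = x
  · subst hy; simp
  · simp [Function.update_of_ne hy]

lemma prod_esat [Nonempty ι] (F : FOForm L) (hF : IsEQ F)
    (h : ℕ → (prodStruc M).carrier) :
    ESat (prodStruc M) h F ↔ ∀ i, ESat (M i) (fun x => h x i) F := by
  induction hF generalizing h with
  | tru => simp [ESat, FOForm.Sat]
  | fal =>
    simp only [ESat, FOForm.Sat]
    exact ⟨fun h' => h'.elim, fun hi => hi (Classical.arbitrary ι)⟩
  | eq s t =>
    simp only [ESat, FOForm.Sat]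
    constructor
    · intro he i
      show s.eval (M i) (fun x => h x i) = t.eval (M i) (fun x => h x i)
      rw [← prod_eval M h s i, ← prod_eval M h t i]
      exact congrFun he i
    · intro he
      show s.eval (prodStruc M) h = t.eval (prodStruc M) h
      funext i
      rw [prod_eval, prod_eval]
      exact he i
  | and hF hG ihF ihG =>
    simp only [ESat, FOForm.Sat] at *
    rw [ihF, ihG, forall_and]
  | ex x hF ih =>
    simp only [ESat, FOForm.Sat] at *
    constructor
    · rintro ⟨d, hd⟩ i
      refine ⟨d i, ?_⟩
      refine Eq.mpr (congrArg (fun g => FOForm.Sat (M i).toInterp g _) (update_comp M h x d i).symm) ?_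
      exact (ih _).mp hd i
    · intro hi
      choose d hd using hi
      refine ⟨d, (ih _).mpr fun i => ?_⟩
      refine Eq.mpr (congrArg (fun g => FOForm.Sat (M i).toInterp g _) (update_comp M h x d i)) ?_
      exact hd i

lemma prod_isFEA [Nonempty ι] (hM : ∀ i, IsFEA (M i)) : IsFEA (prodStruc M) := by
  constructor
  · intro f a b hab
    funext k
    funext i
    have h1 : (M i).funcs f (fun k => a k i) = (M i).funcs f (fun k => b k i) :=
      congrFun hab i
    exact congrFun ((hM i).inj f h1) k
  · intro f g hfg a b hab
    obtain ⟨i⟩ := ‹Nonempty ι›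
    exact (hM i).disj f g hfg _ _ (congrFun hab i)
  · intro x t ht hx hv heq
    obtain ⟨i⟩ := ‹Nonempty ι›
    have h1 := congrFun heq i
    rw [prod_eval] at h1
    exact (hM i).occ x t ht hx (fun y => hv y i) h1

end ProdAux

lemma sat_disjOf {L : FOLang} (M : FOStruc L) (h : ℕ → M.carrier) :
    ∀ l : List (FOForm L), ESat M h (disjOf l) ↔ ∃ F ∈ l, ESat M h F := by
  intro l
  induction l with
  | nil => simp [disjOf, ESat, FOForm.Sat]
  | cons F rest ih =>
    cases rest with
    | nil => simp [disjOf]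
    | cons G rest' =>
      show ESat M h F ∨ ESat M h (disjOf (G :: rest')) ↔ _
      constructor
      · rintro (hF | hrest)
        · exact ⟨F, List.mem_cons_self, hF⟩
        · obtain ⟨F', hm, hF'⟩ := ih.mp hrest
          exact ⟨F', List.mem_cons_of_mem F hm, hF'⟩
      · rintro ⟨F', hm, hF'⟩
        rcases List.mem_cons.mp hm with rfl | hm'
        · exact Or.inl hF'
        · exact Or.inr (ih.mpr ⟨F', hm', hF'⟩)

/-- **Strong Compactness.** For EQ-formulas `E, E₁, …, Eₙ`
(`n ≥ 1`): (1) if `Eᵢ ≺ E` for all `i` then `E₁ ∨ … ∨ Eₙ ≺ E`;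
(2) if `E ≈ E₁ ∨ … ∨ Eₙ` then `E ≈ Eⱼ` for some `j`;
(3) if `E ≼ E₁ ∨ … ∨ Eₙ` then `E ≼ Eⱼ` for some `j`. -/
theorem strong_compactness {L : FOLang} (hc : L.HasConst)
    (E : FOForm L) (hE : IsEQ E) (Es : List (FOForm L))
    (hEs : ∀ Ei ∈ Es, IsEQ Ei) (hne : Es ≠ []) :
    ((∀ Ei ∈ Es, EQlt Ei E) → EQlt (disjOf Es) E) ∧
    (EQequiv E (disjOf Es) → ∃ Ej ∈ Es, EQequiv E Ej) ∧
    (EQle E (disjOf Es) → ∃ Ej ∈ Es, EQle E Ej) := by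

  classical
  -- Part 3 first
  have part3 : EQle E (disjOf Es) → ∃ Ej ∈ Es, EQle E Ej := by
    intro hle
    by_contra hcon
    push_neg at hcon
    haveI : Nonempty (Fin Es.length) :=
      ⟨⟨0, List.length_pos_iff.mpr hne⟩⟩
    have key : ∀ j : Fin Es.length, ∃ M : FOStruc L, IsFEA M ∧
        ∃ h : ℕ → M.carrier, ESat M h E ∧ ¬ ESat M h (Es.get j) := by
      intro j
      have h1 := hcon (Es.get j) (Es.get_mem j)
      simp only [EQle, not_forall] at h1
      obtain ⟨M, hM, h, hsat, hnsat⟩ := h1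
      exact ⟨M, hM, h, hsat, hnsat⟩
    choose M hFEA h hE' hnE using key
    set P := prodStruc M with hP
    have hPFEA : IsFEA P := prod_isFEA M hFEA
    set H : ℕ → P.carrier := fun x j => h j x with hH
    have hHE : ESat P H E := (prod_esat M E hE H).mpr fun j => hE' j
    have hsat : ESat P H (disjOf Es) := hle P hPFEA H hHE
    obtain ⟨F, hmem, hF⟩ := (sat_disjOf P H Es).mp hsat
    obtain ⟨j, hj⟩ := List.mem_iff_get.mp hmem
    have hcomp := (prod_esat M F (hEs F hmem) H).mp hF j
    have hflip := hnE j
    rw [hj] at hflip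
    exact hflip hcomp
  refine ⟨?_, ?_, part3⟩
  · intro hlt
    have hle1 : EQle (disjOf Es) E := by
      intro M hM hval hsat
      obtain ⟨F, hmem, hF⟩ := (sat_disjOf M hval Es).mp hsat
      exact (hlt F hmem).1 M hM hval hF
    refine ⟨hle1, fun heq => ?_⟩
    obtain ⟨Ej, hmem, hEj⟩ := part3 heq.2
    exact (hlt Ej hmem).2 ⟨(hlt Ej hmem).1, hEj⟩
  · rintro ⟨hEle, hdle⟩
    obtain ⟨Ej, hmem, hEj⟩ := part3 hEle
    refine ⟨Ej, hmem, hEj, ?_⟩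
    intro M hM hval hsat
    exact hdle M hM hval ((sat_disjOf M hval Es).mpr ⟨Ej, hmem, hsat⟩)
end

section
/- Suppose the language L contains infinitely many constants, and let H be the Herbrand pre-interpretation of L, whose domain is the set of ground L-terms with each function symbol interpreted formally. For equational formulas F, F' write F ≼_H F' iff F → F' is satisfied in H by every valuation, F ≈_H F' iff F ↔ F' is satisfied in H by every valuation, and F ≺_H F' iff F ≼_H F' and not F ≈_H F'. Then for EQ-formulas E, E₁, …, Eₙ over L: (1) if Eᵢ ≺_H E for all i = 1,…,n, then E₁ ∨ … ∨ Eₙ ≺_H E; (2) if E ≈_H E₁ ∨ … ∨ Eₙ, then E ≈_H Eⱼ for some j; (3) if E ≼_H E₁ ∨ … ∨ Eₙ, then E ≼_H Eⱼ for some j. -/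
/-! ### Auxiliary development for Statement 10 -/

namespace HCAux

variable {L : FOLang}

/-- Size of a term. -/
def sizeT : FOTerm L → ℕ
  | .var _ => 1
  | .func _ ts => 1 + Finset.univ.sum fun i => sizeT (ts i)

lemma sizeT_pos (t : FOTerm L) : 0 < sizeT t := by
  cases t <;> simp [sizeT]

lemma sizeT_lt_func (f : L.Func) (ts : Fin (L.farity f) → FOTerm L) (i : Fin (L.farity f)) :
    sizeT (ts i) < sizeT (.func f ts) := by
  have : sizeT (ts i) ≤ Finset.univ.sum fun j => sizeT (ts j) :=
    Finset.single_le_sum (f := fun j => sizeT (ts j)) (fun j _ => Nat.zero_le _)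
      (Finset.mem_univ i)
  simp only [sizeT]
  omega

/-- The set of subterms of a term. -/
def subT : FOTerm L → Set (FOTerm L)
  | .var x => {.var x}
  | .func f ts => insert (.func f ts) (⋃ i, subT (ts i))

lemma self_mem_subT (t : FOTerm L) : t ∈ subT t := by
  cases t with
  | var x => simp [subT]
  | func f ts => exact Set.mem_insert _ _

lemma mem_subT_func {u : FOTerm L} {f : L.Func} {ts : Fin (L.farity f) → FOTerm L}
    (i : Fin (L.farity f)) (h : u ∈ subT (ts i)) : u ∈ subT (.func f ts) :=
  Set.mem_insert_of_mem _ (Set.mem_iUnion.2 ⟨i, h⟩)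

lemma subT_finite (t : FOTerm L) : (subT t).Finite := by
  induction t with
  | var x => exact Set.finite_singleton _
  | func f ts ih => exact (Set.finite_iUnion ih).insert _

lemma subT_trans : ∀ {t u v : FOTerm L}, u ∈ subT v → v ∈ subT t → u ∈ subT t := by
  intro t
  induction t with
  | var x =>
    intro u v huv hvt
    simp only [subT, Set.mem_singleton_iff] at hvt
    subst hvt; exact huv
  | func f ts ih =>
    intro u v huv hvt
    rcases hvt with hvt | hvt
    · subst hvt; exact huv
    · obtain ⟨i, hi⟩ := Set.mem_iUnion.1 hvt
      exact mem_subT_func i (ih i huv hi)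

/-- Function symbols occurring in a term. -/
def funcSetT : FOTerm L → Set L.Func
  | .var _ => ∅
  | .func f ts => insert f (⋃ i, funcSetT (ts i))

lemma funcSetT_finite (t : FOTerm L) : (funcSetT t).Finite := by
  induction t with
  | var x => exact Set.finite_empty
  | func f ts ih => exact (Set.finite_iUnion ih).insert _

lemma funcSetT_subT : ∀ {t u : FOTerm L}, u ∈ subT t → funcSetT u ⊆ funcSetT t := by
  intro t
  induction t with
  | var x =>
    intro u hu
    simp only [subT, Set.mem_singleton_iff] at hu
    subst hu; exact subset_rfl
  | func f ts ih =>
    intro u hu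
    rcases hu with hu | hu
    · subst hu; exact subset_rfl
    · obtain ⟨i, hi⟩ := Set.mem_iUnion.1 hu
      exact (ih i hi).trans fun g hg =>
        Set.mem_insert_of_mem _ (Set.mem_iUnion.2 ⟨i, hg⟩)

/-- Function symbols occurring in a formula. -/
def funcSetF : FOForm L → Set L.Func
  | .tru => ∅
  | .fal => ∅
  | .eq s t => funcSetT s ∪ funcSetT t
  | .atom _ ts => ⋃ i, funcSetT (ts i)
  | .not F => funcSetF F
  | .and F G => funcSetF F ∪ funcSetF G
  | .or F G => funcSetF F ∪ funcSetF G
  | .imp F G => funcSetF F ∪ funcSetF G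
  | .iff F G => funcSetF F ∪ funcSetF G
  | .ex _ F => funcSetF F
  | .all _ F => funcSetF F

lemma funcSetF_finite (F : FOForm L) : (funcSetF F).Finite := by
  induction F with
  | tru => exact Set.finite_empty
  | fal => exact Set.finite_empty
  | eq s t => exact (funcSetT_finite s).union (funcSetT_finite t)
  | atom p ts => exact Set.finite_iUnion fun i => funcSetT_finite (ts i)
  | not F ih => exact ih
  | and F G ih1 ih2 => exact ih1.union ih2
  | or F G ih1 ih2 => exact ih1.union ih2
  | imp F G ih1 ih2 => exact ih1.union ih2
  | iff F G ih1 ih2 => exact ih1.union ih2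
  | ex x F ih => exact ih
  | all x F ih => exact ih


/-- The ground term given by a constant. -/
def mkConst (f : L.Func) (hf : L.farity f = 0) : GroundTerm L :=
  ⟨.func f (fun i => Fin.elim0 (Fin.cast hf i)), by
    ext x
    simp only [FOTerm.vars, Finset.mem_biUnion, Finset.mem_univ, true_and,
      Finset.notMem_empty, iff_false, not_exists]
    intro i
    exact Fin.elim0 (Fin.cast hf i)⟩

lemma herb_funcs_val (hc : L.HasConst) (f : L.Func)
    (a : Fin (L.farity f) → GroundTerm L) :
    ((Herbrand L hc).funcs f a).1 = .func f (fun i => (a i).1) := rfl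

lemma herb_head_inj (hc : L.HasConst) {f g : L.Func}
    {a : Fin (L.farity f) → (Herbrand L hc).carrier}
    {b : Fin (L.farity g) → (Herbrand L hc).carrier}
    (h : (Herbrand L hc).funcs f a = (Herbrand L hc).funcs g b) : f = g := by
  have h' := congrArg Subtype.val h
  change FOTerm.func f (fun i => (a i).1) = FOTerm.func g (fun i => (b i).1) at h'
  injection h'

lemma herb_args_inj (hc : L.HasConst) {f : L.Func}
    {a b : Fin (L.farity f) → (Herbrand L hc).carrier}
    (h : (Herbrand L hc).funcs f a = (Herbrand L hc).funcs f b) : a = b := by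
  have h' := congrArg Subtype.val h
  change FOTerm.func f (fun i => (a i).1) = FOTerm.func f (fun i => (b i).1) at h'
  injection h' with _ h2
  funext i
  exact Subtype.ext (congrFun h2 i)

lemma mkConst_funcSet (f : L.Func) (hf : L.farity f = 0) :
    funcSetT (mkConst f hf).1 = {f} := by
  simp only [mkConst, funcSetT]
  have : (⋃ i : Fin (L.farity f), funcSetT ((fun i => Fin.elim0 (Fin.cast hf i) :
      Fin (L.farity f) → FOTerm L) i)) = ∅ := by
    apply Set.eq_empty_iff_forall_notMem.2
    intro x hx
    obtain ⟨i, _⟩ := Set.mem_iUnion.1 hx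
    exact Fin.elim0 (Fin.cast hf i)
  rw [this]
  simp

open Classical in
/-- Combination of an `n`-tuple of ground terms: recurse through common head
symbols, and apply `tagT` to tuples without a common head. -/
noncomputable def gammaAux (hc : L.HasConst) (n : ℕ) (hn : 0 < n)
    (tagT : (Fin n → GroundTerm L) → GroundTerm L)
    (tv : Fin n → GroundTerm L) : GroundTerm L :=
  if h : ∃ (f : L.Func) (b : Fin n → Fin (L.farity f) → GroundTerm L),
      ∀ j, tv j = (Herbrand L hc).funcs f (b j) then
    (Herbrand L hc).funcs h.choose
      (fun i => gammaAux hc n hn tagT (fun j => h.choose_spec.choose j i))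
  else tagT tv
termination_by sizeT (tv ⟨0, hn⟩).1
decreasing_by
  have hspec := h.choose_spec.choose_spec ⟨0, hn⟩
  rw [hspec, herb_funcs_val]
  exact sizeT_lt_func h.choose (fun i => (h.choose_spec.choose ⟨0, hn⟩ i).1) i

lemma gammaAux_hom (hc : L.HasConst) (n : ℕ) (hn : 0 < n)
    (tagT : (Fin n → GroundTerm L) → GroundTerm L) (f : L.Func)
    (b : Fin n → Fin (L.farity f) → GroundTerm L) :
    gammaAux hc n hn tagT (fun j => (Herbrand L hc).funcs f (b j)) =
      (Herbrand L hc).funcs f (fun i => gammaAux hc n hn tagT (fun j => b j i)) := by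
  have hex : ∃ (g : L.Func) (c : Fin n → Fin (L.farity g) → GroundTerm L),
      ∀ j, (fun j => (Herbrand L hc).funcs f (b j)) j = (Herbrand L hc).funcs g (c j) :=
    ⟨f, b, fun j => rfl⟩
  conv_lhs => unfold gammaAux
  refine (gammaAux.eq_1 hc n hn tagT _).trans ((dif_pos hex).trans ?_)
  suffices H : ∀ (g : L.Func) (c : Fin n → Fin (L.farity g) → GroundTerm L),
      (∀ j, (Herbrand L hc).funcs f (b j) = (Herbrand L hc).funcs g (c j)) →
      (Herbrand L hc).funcs g (fun i => gammaAux hc n hn tagT (fun j => c j i)) =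
        (Herbrand L hc).funcs f (fun i => gammaAux hc n hn tagT (fun j => b j i)) by
    exact H hex.choose hex.choose_spec.choose hex.choose_spec.choose_spec
  intro g c hgc
  have hfg : f = g := herb_head_inj hc (hgc ⟨0, hn⟩)
  subst hfg
  have hbc : b = c := by
    funext j
    exact herb_args_inj hc (hgc j)
  subst hbc
  rfl

lemma gammaAux_tag (hc : L.HasConst) (n : ℕ) (hn : 0 < n)
    (tagT : (Fin n → GroundTerm L) → GroundTerm L) (tv : Fin n → GroundTerm L)
    (h : ¬ ∃ (f : L.Func) (b : Fin n → Fin (L.farity f) → GroundTerm L),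
      ∀ j, tv j = (Herbrand L hc).funcs f (b j)) :
    gammaAux hc n hn tagT tv = tagT tv := by
  conv_lhs => unfold gammaAux
  exact dif_neg h

open Classical in
/-- Replacement of tagged constants in a term. -/
noncomputable def phiT (isT : L.Func → Prop) (rep : L.Func → FOTerm L) :
    FOTerm L → FOTerm L
  | .var x => .var x
  | .func f ts => if isT f then rep f else .func f (fun i => phiT isT rep (ts i))

lemma phiT_vars (isT : L.Func → Prop) (rep : L.Func → FOTerm L)
    (hrep : ∀ f, isT f → (rep f).vars = ∅) :
    ∀ t : FOTerm L, (phiT isT rep t).vars ⊆ t.vars := by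
  intro t
  induction t with
  | var x => simp [phiT]
  | func f ts ih =>
    by_cases h : isT f
    · simp only [phiT, if_pos h, hrep f h]
      exact Finset.empty_subset _
    · simp only [phiT, if_neg h, FOTerm.vars]
      intro x hx
      obtain ⟨i, _, hi⟩ := Finset.mem_biUnion.1 hx
      exact Finset.mem_biUnion.2 ⟨i, Finset.mem_univ i, ih i hi⟩

/-- Replacement of tagged constants, on ground terms. -/
noncomputable def phiG (isT : L.Func → Prop) (rep : L.Func → GroundTerm L)
    (u : GroundTerm L) : GroundTerm L :=
  ⟨phiT isT (fun f => (rep f).1) u.1, by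
    apply Finset.eq_empty_of_forall_notMem
    intro x hx
    have := phiT_vars isT (fun f => (rep f).1) (fun f _ => (rep f).2) u.1 hx
    rw [u.2] at this
    exact Finset.notMem_empty x this⟩

lemma phiG_hom (hc : L.HasConst) (isT : L.Func → Prop) (rep : L.Func → GroundTerm L)
    {f : L.Func} (hf : ¬ isT f) (a : Fin (L.farity f) → GroundTerm L) :
    phiG isT rep ((Herbrand L hc).funcs f a) =
      (Herbrand L hc).funcs f (fun i => phiG isT rep (a i)) := by
  apply Subtype.ext
  show phiT isT (fun f => (rep f).1) (.func f (fun i => (a i).1)) = _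
  rw [phiT, if_neg hf]
  rfl

lemma phiG_tag (isT : L.Func → Prop) (rep : L.Func → GroundTerm L)
    {f : L.Func} (hf0 : L.farity f = 0) (hf : isT f) :
    phiG isT rep (mkConst f hf0) = rep f := by
  apply Subtype.ext
  show phiT isT (fun f => (rep f).1) (mkConst f hf0).1 = _
  simp only [mkConst, phiT, if_pos hf]


section Semantics

variable (M : FOStruc L)

lemma eval_agree {h h' : ℕ → M.carrier} :
    ∀ t : FOTerm L, (∀ x ∈ t.vars, h x = h' x) → t.eval M h = t.eval M h' := by
  intro t
  induction t with
  | var x => intro ha; exact ha x (by simp [FOTerm.vars])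
  | func f ts ih =>
    intro ha
    show M.funcs f _ = M.funcs f _
    congr 1
    funext i
    exact ih i fun x hx => ha x (Finset.mem_biUnion.2 ⟨i, Finset.mem_univ i, hx⟩)

lemma sat_agree {F : FOForm L} (hF : IsEQ F) :
    ∀ {h h' : ℕ → M.carrier}, (∀ x ∈ F.fv, h x = h' x) →
      ESat M h F → ESat M h' F := by
  induction hF with
  | tru => intro _ _ _ _; trivial
  | fal => intro _ _ _ hs; exact hs
  | eq s t =>
    intro h h' ha hs
    show s.eval M h' = t.eval M h'
    rw [← eval_agree M s fun x hx => ha x (Finset.mem_union_left _ hx),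
      ← eval_agree M t fun x hx => ha x (Finset.mem_union_right _ hx)]
    exact hs
  | and h1 h2 ih1 ih2 =>
    intro h h' ha hs
    exact ⟨ih1 (fun x hx => ha x (Finset.mem_union_left _ hx)) hs.1,
      ih2 (fun x hx => ha x (Finset.mem_union_right _ hx)) hs.2⟩
  | ex x hF ih =>
    intro h h' ha hs
    obtain ⟨d, hd⟩ := hs
    refine ⟨d, ih (fun y hy => ?_) hd⟩
    by_cases hyx : y = x
    · subst hyx; exact (Function.update_self y d h).trans (Function.update_self y d h').symm
    · exact (Function.update_of_ne hyx _ _).trans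
        ((ha y (Finset.mem_erase.2 ⟨hyx, hy⟩)).trans (Function.update_of_ne hyx _ _).symm)

variable {S : Set L.Func} {φ : M.carrier → M.carrier}

lemma eval_hom (hφ : ∀ f ∈ S, ∀ a, φ (M.funcs f a) = M.funcs f fun i => φ (a i))
    (h : ℕ → M.carrier) :
    ∀ t : FOTerm L, funcSetT t ⊆ S → φ (t.eval M h) = t.eval M (fun x => φ (h x)) := by
  intro t
  induction t with
  | var x => intro _; rfl
  | func f ts ih =>
    intro hsub
    show φ (M.funcs f fun i => (ts i).eval M h) = M.funcs f fun i => (ts i).eval M _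
    rw [hφ f (hsub (Set.mem_insert f _)) _]
    congr 1
    funext i
    exact ih i fun g hg => hsub (Set.mem_insert_of_mem _ (Set.mem_iUnion.2 ⟨i, hg⟩))

lemma sat_hom (hφ : ∀ f ∈ S, ∀ a, φ (M.funcs f a) = M.funcs f fun i => φ (a i))
    {F : FOForm L} (hF : IsEQ F) :
    ∀ h : ℕ → M.carrier, funcSetF F ⊆ S → ESat M h F → ESat M (fun x => φ (h x)) F := by
  induction hF with
  | tru => intro _ _ _; trivial
  | fal => intro _ _ hs; exact hs
  | eq s t =>
    intro h hsub hs
    show s.eval M _ = t.eval M _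
    rw [← eval_hom M hφ h s fun g hg => hsub (Set.mem_union_left _ hg),
      ← eval_hom M hφ h t fun g hg => hsub (Set.mem_union_right _ hg)]
    exact congrArg φ hs
  | and h1 h2 ih1 ih2 =>
    intro h hsub hs
    exact ⟨ih1 h (fun g hg => hsub (Set.mem_union_left _ hg)) hs.1,
      ih2 h (fun g hg => hsub (Set.mem_union_right _ hg)) hs.2⟩
  | ex x hF ih =>
    intro h hsub hs
    obtain ⟨d, hd⟩ := hs
    refine ⟨φ d, ?_⟩
    have : (fun y => φ (Function.update h x d y)) =
        Function.update (fun y => φ (h y)) x (φ d) := by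
      funext y
      by_cases hyx : y = x
      · subst hyx; simp [Function.update]
      · rw [Function.update_of_ne hyx]; exact congrArg φ (Function.update_of_ne hyx _ _)
    have := ih (Function.update h x d) hsub hd
    rwa [‹(fun y => φ (Function.update h x d y)) = _›] at this

variable {n : ℕ} {Γ : (Fin n → M.carrier) → M.carrier}

lemma eval_prod
    (hΓ : ∀ (f : L.Func) (b : Fin n → Fin (L.farity f) → M.carrier),
      Γ (fun j => M.funcs f (b j)) = M.funcs f fun i => Γ fun j => b j i)
    (hv : Fin n → ℕ → M.carrier) :
    ∀ t : FOTerm L,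
      Γ (fun j => t.eval M (hv j)) = t.eval M (fun x => Γ fun j => hv j x) := by
  intro t
  induction t with
  | var x => rfl
  | func f ts ih =>
    show Γ (fun j => M.funcs f fun i => (ts i).eval M (hv j)) = M.funcs f _
    rw [hΓ f fun j i => (ts i).eval M (hv j)]
    congr 1
    funext i
    exact ih i

lemma sat_prod (hn : 0 < n)
    (hΓ : ∀ (f : L.Func) (b : Fin n → Fin (L.farity f) → M.carrier),
      Γ (fun j => M.funcs f (b j)) = M.funcs f fun i => Γ fun j => b j i)
    {F : FOForm L} (hF : IsEQ F) :
    ∀ hv : Fin n → ℕ → M.carrier, (∀ j, ESat M (hv j) F) →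
      ESat M (fun x => Γ fun j => hv j x) F := by
  induction hF with
  | tru => intro _ _; trivial
  | fal => intro hv hs; exact hs ⟨0, hn⟩
  | eq s t =>
    intro hv hs
    show s.eval M _ = t.eval M _
    rw [← eval_prod M hΓ hv s, ← eval_prod M hΓ hv t]
    exact congrArg Γ (funext fun j => hs j)
  | and h1 h2 ih1 ih2 =>
    intro hv hs
    exact ⟨ih1 hv fun j => (hs j).1, ih2 hv fun j => (hs j).2⟩
  | ex x hF ih =>
    intro hv hs
    choose d hd using fun j => hs j
    refine ⟨Γ d, ?_⟩
    have key : (fun y => Γ fun j => Function.update (hv j) x (d j) y) =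
        Function.update (fun y => Γ fun j => hv j y) x (Γ d) := by
      funext y
      by_cases hyx : y = x
      · subst hyx; simp [Function.update]
      · rw [Function.update_of_ne hyx]
        congr 1
        funext j
        exact Function.update_of_ne hyx _ _
    have := ih (fun j => Function.update (hv j) x (d j)) hd
    rwa [key] at this

lemma sat_disjOf (h : ℕ → M.carrier) :
    ∀ Es : List (FOForm L), ESat M h (disjOf Es) ↔ ∃ F ∈ Es, ESat M h F := by
  intro Es
  induction Es with
  | nil =>
    simp only [disjOf, List.not_mem_nil]
    exact ⟨fun hs => hs.elim, fun ⟨F, hF, _⟩ => hF.elim⟩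
  | cons F rest ih =>
    cases rest with
    | nil => simp [disjOf]
    | cons G t =>
      have hd : disjOf (F :: G :: t) = .or F (disjOf (G :: t)) := rfl
      rw [hd]
      show ESat M h F ∨ ESat M h (disjOf (G :: t)) ↔ _
      rw [ih]
      simp only [List.mem_cons]
      constructor
      · rintro (hs | ⟨F', hF', hs⟩)
        · exact ⟨F, Or.inl rfl, hs⟩
        · exact ⟨F', Or.inr hF', hs⟩
      · rintro ⟨F', (rfl | hF'), hs⟩
        · exact Or.inl hs
        · exact Or.inr ⟨F', hF', hs⟩

end Semantics


section Construction

lemma exists_tagging {L : FOLang} (hinf : Infinite { f : L.Func // L.farity f = 0 })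
    {α : Type} [Countable α] (Bad : Set L.Func) (hBad : Bad.Finite) :
    ∃ tagC : α → L.Func, Function.Injective tagC ∧
      (∀ a, L.farity (tagC a) = 0) ∧ ∀ a, tagC a ∉ Bad := by
  have h1 : ({f : L.Func | L.farity f = 0}).Infinite := by
    rw [← Set.infinite_coe_iff]
    exact hinf
  have h2 : ({f : L.Func | L.farity f = 0} \ Bad).Infinite := h1.diff hBad
  have e : ℕ ↪ ↥({f : L.Func | L.farity f = 0} \ Bad) := h2.natEmbedding
  obtain ⟨ι, hι⟩ := exists_injective_nat α
  refine ⟨fun a => (e (ι a)).1, ?_, ?_, ?_⟩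
  · intro a b hab
    exact hι (e.injective (Subtype.ext hab))
  · intro a
    exact (e (ι a)).2.1
  · intro a
    exact (e (ι a)).2.2

variable {L : FOLang} (hc : L.HasConst) (n : ℕ) (hn : 0 < n)
  (hv : Fin n → ℕ → GroundTerm L) (W : Finset ℕ)

/-- The relevant tuples: simultaneous subterm tuples of the values of the
given valuations. -/
def Dset : Set (Fin n → GroundTerm L) :=
  {tv | ∃ x ∈ W, ∀ j, (tv j).1 ∈ subT (hv j x).1}

lemma Dset_finite : (Dset n hv W).Finite := by
  have hco : ∀ j : Fin n,
      ({u : GroundTerm L | u.1 ∈ ⋃ x ∈ W, subT (hv j x).1}).Finite := by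
    intro j
    have hfin : (⋃ x ∈ W, subT (hv j x).1).Finite :=
      Set.Finite.biUnion W.finite_toSet fun x _ => subT_finite _
    exact hfin.preimage Subtype.val_injective.injOn
  apply Set.Finite.subset (Set.Finite.pi hco)
  rintro tv ⟨x, hx, hj⟩
  exact fun j _ => Set.mem_biUnion hx (hj j)

variable (tagC : Option ↥(Dset n hv W) → L.Func) (h0 : ∀ o, L.farity (tagC o) = 0)

open Classical in
/-- The tag function on tuples. -/
noncomputable def tagTup : (Fin n → GroundTerm L) → GroundTerm L := fun tv =>
  if h : tv ∈ Dset n hv W then mkConst (tagC (some ⟨tv, h⟩)) (h0 _)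
  else mkConst (tagC none) (h0 _)

/-- The combination map. -/
noncomputable def Gam : (Fin n → GroundTerm L) → GroundTerm L :=
  gammaAux hc n hn (tagTup n hv W tagC h0)

lemma Gam_hom (f : L.Func) (b : Fin n → Fin (L.farity f) → GroundTerm L) :
    Gam hc n hn hv W tagC h0 (fun j => (Herbrand L hc).funcs f (b j)) =
      (Herbrand L hc).funcs f fun i => Gam hc n hn hv W tagC h0 fun j => b j i :=
  gammaAux_hom hc n hn _ f b

/-- Tagged symbols. -/
def isTag : L.Func → Prop := fun f => ∃ d : ↥(Dset n hv W), tagC (some d) = f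

open Classical in
/-- The `j`-th projection on tags. -/
noncomputable def repJ (j : Fin n) : L.Func → GroundTerm L := fun f =>
  if h : isTag n hv W tagC f then h.choose.1 j else mkConst (tagC none) (h0 none)

/-- The `j`-th projection homomorphism. -/
noncomputable def phiJ (j : Fin n) : GroundTerm L → GroundTerm L :=
  phiG (isTag n hv W tagC) (repJ n hv W tagC h0 j)

lemma phiJ_hom {f : L.Func} (hf : ¬ isTag n hv W tagC f) (j : Fin n)
    (a : Fin (L.farity f) → GroundTerm L) :
    phiJ n hv W tagC h0 j ((Herbrand L hc).funcs f a) =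
      (Herbrand L hc).funcs f fun i => phiJ n hv W tagC h0 j (a i) :=
  phiG_hom hc _ _ hf a

lemma repJ_tag (hinj : Function.Injective tagC) (d : ↥(Dset n hv W)) (j : Fin n) :
    repJ n hv W tagC h0 j (tagC (some d)) = d.1 j := by
  have hex : isTag n hv W tagC (tagC (some d)) := ⟨d, rfl⟩
  unfold repJ
  rw [dif_pos hex]
  have hch : hex.choose = d := Option.some.inj (hinj hex.choose_spec)
  rw [hch]

lemma phiJ_Gam (hinj : Function.Injective tagC)
    (hnb : ∀ (o : Option ↥(Dset n hv W)) (j : Fin n), ∀ x ∈ W,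
      tagC o ∉ funcSetT (hv j x).1) :
    ∀ tv ∈ Dset n hv W, ∀ j,
      phiJ n hv W tagC h0 j (Gam hc n hn hv W tagC h0 tv) = tv j := by
  suffices key : ∀ (m : ℕ) (tv : Fin n → GroundTerm L), sizeT (tv ⟨0, hn⟩).1 ≤ m →
      tv ∈ Dset n hv W → ∀ j,
        phiJ n hv W tagC h0 j (Gam hc n hn hv W tagC h0 tv) = tv j by
    exact fun tv htv j => key (sizeT (tv ⟨0, hn⟩).1) tv le_rfl htv j
  intro m
  induction m with
  | zero =>
    intro tv hsz _ _
    exact absurd hsz (by have := sizeT_pos (tv ⟨0, hn⟩).1; omega)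
  | succ m ih =>
    intro tv hsz hD j
    by_cases hch : ∃ (f : L.Func) (b : Fin n → Fin (L.farity f) → GroundTerm L),
        ∀ j, tv j = (Herbrand L hc).funcs f (b j)
    · obtain ⟨f, b, hb⟩ := hch
      obtain ⟨x, hxW, hsub⟩ := hD
      have hnotT : ¬ isTag n hv W tagC f := by
        rintro ⟨d, rfl⟩
        have h1 : tagC (some d) ∈ funcSetT (tv ⟨0, hn⟩).1 := by
          rw [hb ⟨0, hn⟩, herb_funcs_val]
          exact Set.mem_insert _ _
        exact hnb (some d) ⟨0, hn⟩ x hxW (funcSetT_subT (hsub ⟨0, hn⟩) h1)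
      have htv : tv = fun j => (Herbrand L hc).funcs f (b j) := funext hb
      rw [htv, Gam_hom, phiJ_hom hc n hv W tagC h0 hnotT j]
      show _ = (Herbrand L hc).funcs f (b j)
      congr 1
      funext i
      have hlt : sizeT ((b ⟨0, hn⟩ i)).1 < sizeT (tv ⟨0, hn⟩).1 := by
        rw [hb ⟨0, hn⟩, herb_funcs_val]
        exact sizeT_lt_func f (fun i => (b ⟨0, hn⟩ i).1) i
      have hgoal : sizeT ((fun j' => b j' i) ⟨0, hn⟩).1 ≤ m := by
        show sizeT (b ⟨0, hn⟩ i).1 ≤ m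
        omega
      refine ih (fun j' => b j' i) hgoal ⟨x, hxW, fun j' => ?_⟩ j
      refine subT_trans ?_ (hsub j')
      rw [hb j', herb_funcs_val]
      exact mem_subT_func i (self_mem_subT _)
    · have hGam : Gam hc n hn hv W tagC h0 tv = tagTup n hv W tagC h0 tv :=
        gammaAux_tag hc n hn _ tv hch
      have hTag : tagTup n hv W tagC h0 tv =
          mkConst (tagC (some ⟨tv, hD⟩)) (h0 _) := dif_pos hD
      rw [hGam, hTag]
      have := phiG_tag (isTag n hv W tagC) (repJ n hv W tagC h0 j)
        (h0 (some ⟨tv, hD⟩)) ⟨⟨tv, hD⟩, rfl⟩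
      rw [show phiJ n hv W tagC h0 j = phiG (isTag n hv W tagC)
        (repJ n hv W tagC h0 j) from rfl, this]
      exact repJ_tag n hv W tagC h0 hinj ⟨tv, hD⟩ j

/-- Main combination lemma: from a finite family of valuations one can build
a single valuation which satisfies every EQ-formula satisfied by all of them,
and which is generic: any EQ-formula (with controlled symbols and free
variables) it satisfies is satisfied by each of them. -/
lemma combine_main {L : FOLang} (hc : L.HasConst)
    (hinf : Infinite { f : L.Func // L.farity f = 0 })
    (n : ℕ) (hn : 0 < n) (hv : Fin n → ℕ → GroundTerm L) (W : Finset ℕ)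
    (SymE : Set L.Func) (hSymE : SymE.Finite) :
    ∃ g : ℕ → (Herbrand L hc).carrier,
      (∀ F : FOForm L, IsEQ F → (∀ j, ESat (Herbrand L hc) (hv j) F) →
        ESat (Herbrand L hc) g F) ∧
      ∀ (j : Fin n) (F : FOForm L), IsEQ F → F.fv ⊆ W →
        funcSetF F ⊆ SymE → ESat (Herbrand L hc) g F → ESat (Herbrand L hc) (hv j) F := by
  classical
  set Bad : Set L.Func :=
    SymE ∪ ⋃ j : Fin n, ⋃ x ∈ W, funcSetT (hv j x).1 with hBadDef
  have hBadFin : Bad.Finite := by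
    refine hSymE.union (Set.finite_iUnion fun j => ?_)
    exact Set.Finite.biUnion W.finite_toSet fun x _ => funcSetT_finite _
  haveI : Countable ↥(Dset n hv W) := (Dset_finite n hv W).countable.to_subtype
  obtain ⟨tagC, hinj, h0, hnotBad⟩ :=
    exists_tagging hinf (α := Option ↥(Dset n hv W)) Bad hBadFin
  refine ⟨fun x => Gam hc n hn hv W tagC h0 (fun j => hv j x), ?_, ?_⟩
  · intro F hF hall
    exact sat_prod (Herbrand L hc) hn (Gam_hom hc n hn hv W tagC h0) hF hv hall
  · intro j F hF hfv hsym hsat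
    have hnTagF : ∀ f ∈ funcSetF F, ¬ isTag n hv W tagC f := by
      rintro f hf ⟨d, rfl⟩
      exact hnotBad (some d) (Or.inl (hsym hf))
    have h1 := sat_hom (Herbrand L hc)
      (S := {f : L.Func | ¬ isTag n hv W tagC f})
      (φ := phiJ n hv W tagC h0 j)
      (fun f hf a => phiJ_hom hc n hv W tagC h0 hf j a) hF
      (fun x => Gam hc n hn hv W tagC h0 fun j' => hv j' x) hnTagF hsat
    refine sat_agree (Herbrand L hc) hF (fun x hx => ?_) h1
    have hxW : x ∈ W := hfv hx
    have hmem : (fun j' => hv j' x) ∈ Dset n hv W :=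
      ⟨x, hxW, fun j' => self_mem_subT _⟩
    exact phiJ_Gam hc n hn hv W tagC h0 hinj
      (fun o j' x' hx' hmem' => hnotBad o
        (Or.inr (Set.mem_iUnion.2 ⟨j', Set.mem_biUnion hx' hmem'⟩)))
      _ hmem j

end Construction

end HCAux

/-- **Compactness over the Herbrand pre-interpretation.**
Suppose `L` has infinitely many constants and let `H` be the Herbrand
pre-interpretation of `L`.  Then for EQ-formulas `E, E₁, …, Eₙ` (`n ≥ 1`):
(1) if `Eᵢ ≺_H E` for all `i` then `E₁ ∨ … ∨ Eₙ ≺_H E`;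
(2) if `E ≈_H E₁ ∨ … ∨ Eₙ` then `E ≈_H Eⱼ` for some `j`;
(3) if `E ≼_H E₁ ∨ … ∨ Eₙ` then `E ≼_H Eⱼ` for some `j`. -/
theorem herbrand_compactness {L : FOLang} (hc : L.HasConst)
    (hinf : Infinite { f : L.Func // L.farity f = 0 })
    (E : FOForm L) (hE : IsEQ E) (Es : List (FOForm L))
    (hEs : ∀ Ei ∈ Es, IsEQ Ei) (hne : Es ≠ []) :
    let H := Herbrand L hc
    let le : FOForm L → FOForm L → Prop := fun F F' =>
      ∀ h : ℕ → H.carrier, ESat H h F → ESat H h F'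
    let equiv : FOForm L → FOForm L → Prop := fun F F' => le F F' ∧ le F' F
    let lt : FOForm L → FOForm L → Prop := fun F F' => le F F' ∧ ¬ equiv F F'
    ((∀ Ei ∈ Es, lt Ei E) → lt (disjOf Es) E) ∧
    (equiv E (disjOf Es) → ∃ Ej ∈ Es, equiv E Ej) ∧
    (le E (disjOf Es) → ∃ Ej ∈ Es, le E Ej) := by
  intro H le equiv lt
  have hn : 0 < Es.length := List.length_pos_iff.2 hne
  have part3 : le E (disjOf Es) → ∃ Ej ∈ Es, le E Ej := by
    intro hle
    by_contra hcon
    push_neg at hcon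
    have hcex : ∀ j : Fin Es.length, ∃ h : ℕ → H.carrier,
        ESat H h E ∧ ¬ ESat H h (Es.get j) := by
      intro j
      have h1 : ¬ le E (Es.get j) := hcon (Es.get j) (List.get_mem Es j)
      by_contra h2
      push_neg at h2
      exact h1 fun h hs => h2 h hs
    choose hv hvE hvN using hcex
    obtain ⟨g, hg1, hg2⟩ := HCAux.combine_main hc hinf Es.length hn hv
      (Finset.univ.biUnion fun j : Fin Es.length => (Es.get j).fv)
      (⋃ j : Fin Es.length, HCAux.funcSetF (Es.get j))
      (Set.finite_iUnion fun j => HCAux.funcSetF_finite _)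
    have hgE : ESat H g E := hg1 E hE fun j => hvE j
    have hgD : ESat H g (disjOf Es) := hle g hgE
    obtain ⟨F, hF, hsat⟩ := (HCAux.sat_disjOf H g Es).1 hgD
    obtain ⟨j, hj⟩ := List.mem_iff_get.1 hF
    subst hj
    refine hvN j (hg2 j (Es.get j) (hEs _ hF) ?_ ?_ hsat)
    · exact Finset.subset_biUnion_of_mem (fun j : Fin Es.length => (Es.get j).fv)
        (Finset.mem_univ j)
    · exact Set.subset_iUnion (fun j : Fin Es.length => HCAux.funcSetF (Es.get j)) j
  have hdisj_intro : ∀ Ej ∈ Es, ∀ h : ℕ → H.carrier, ESat H h Ej →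
      ESat H h (disjOf Es) := fun Ej hj h hs =>
    (HCAux.sat_disjOf H h Es).2 ⟨Ej, hj, hs⟩
  refine ⟨?_, ?_, part3⟩
  · intro hall
    refine ⟨fun h hs => ?_, fun heqv => ?_⟩
    · obtain ⟨F, hF, hs'⟩ := (HCAux.sat_disjOf H h Es).1 hs
      exact (hall F hF).1 h hs'
    · obtain ⟨Ej, hj, hleEj⟩ := part3 heqv.2
      exact (hall Ej hj).2 ⟨(hall Ej hj).1, hleEj⟩
  · intro heqv
    obtain ⟨Ej, hj, h1⟩ := part3 heqv.1
    exact ⟨Ej, hj, h1, fun h hs => heqv.2 h (hdisj_intro Ej hj h hs)⟩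
end

section
/- Let σ and θ be finite substitutions with θ an extension of σ, and let M be a non-trivial model of the free equality axioms FEA(L). Then Inst_M(θ) = Inst_M(σ) if and only if θ is a regular extension of σ. -/
private lemma eval_congr_aux {L : FOLang} (M : FOStruc L) (t : FOTerm L)
    {g g' : ℕ → M.carrier} (h : ∀ y ∈ t.vars, g y = g' y) :
    t.eval M g = t.eval M g' := by
  induction t with
  | var x => exact h x (by simp [FOTerm.vars])
  | func f ts ih =>
    simp only [FOTerm.eval]
    congr 1
    funext i
    exact ih i fun y hy => h y (by
      simp only [FOTerm.vars, Finset.mem_biUnion, Finset.mem_univ, true_and]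
      exact ⟨i, hy⟩)

private lemma eval_det_aux {L : FOLang} {M : FOStruc L} (hM : IsFEA M) (t : FOTerm L)
    {g g' : ℕ → M.carrier} {y : ℕ} (hy : y ∈ t.vars)
    (heq : t.eval M g = t.eval M g') : g y = g' y := by
  induction t with
  | var x =>
    simp only [FOTerm.vars, Finset.mem_singleton] at hy
    subst hy
    simpa [FOTerm.eval] using heq
  | func f ts ih =>
    simp only [FOTerm.eval] at heq
    have h2 := hM.inj f heq
    simp only [FOTerm.vars, Finset.mem_biUnion, Finset.mem_univ, true_and] at hy
    obtain ⟨i, hi⟩ := hy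
    exact ih i hi (congrFun h2 i)

private lemma exists_outside_aux {L : FOLang} (hc : L.HasConst) {M : FOStruc L}
    (hM : IsFEA M) (hnt : M.Nontriv) (f : L.Func) :
    ∃ a : M.carrier, ∀ ar, a ≠ M.funcs f ar := by
  obtain ⟨c, hc0⟩ := hc
  by_cases hcf : c = f
  · subst hcf
    obtain ⟨a, b, hab⟩ := hnt
    have hall : ∀ ar ar' : Fin (L.farity c) → M.carrier,
        M.funcs c ar = M.funcs c ar' := by
      intro ar ar'
      congr 1
      funext i
      exact Fin.elim0 (Fin.cast hc0 i)
    by_cases ha : a = M.funcs c (fun i => Fin.elim0 (Fin.cast hc0 i))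
    · refine ⟨b, fun ar h => ?_⟩
      exact hab (ha.trans ((hall _ ar).trans h.symm))
    · refine ⟨a, fun ar h => ?_⟩
      exact ha (h.trans (hall ar _))
  · exact ⟨M.funcs c (fun i => Fin.elim0 (Fin.cast hc0 i)),
      fun ar h => hM.disj c f hcf _ ar h⟩

private lemma mem_range_aux {L : FOLang} {σ : FinSubst L} {x y : ℕ}
    (hx : x ∈ σ.dom) (hy : y ∈ (σ.map x).vars) : y ∈ σ.range :=
  Finset.mem_biUnion.2 ⟨x, hx, hy⟩

/-- For an extension `θ` of `σ` and a non-trivial model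
`M` of `FEA(L)`: `Inst_M(θ) = Inst_M(σ)` iff `θ` is a regular extension of
`σ`. -/
theorem regular_extension_iff {L : FOLang} (hc : L.HasConst)
    (M : FOStruc L) (hM : IsFEA M) (hnt : M.Nontriv)
    (σ θ : FinSubst L) (hext : FinSubst.Extends θ σ) :
    FinSubst.Inst M θ = FinSubst.Inst M σ ↔ FinSubst.RegExt θ σ := by
  classical
  obtain ⟨g0el⟩ := M.inhab
  set g₀ : ℕ → M.carrier := fun _ => g0el with hg₀
  constructor
  · intro hInst
    have hsub : ∀ h : ℕ → M.carrier, h ∈ FinSubst.Inst M σ → h ∈ FinSubst.Inst M θ := by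
      intro h hh; rw [hInst]; exact hh
    -- a generic way to produce elements of Inst σ with arbitrary values off σ.dom
    have hmk : ∀ c : ℕ → M.carrier,
        (fun w => if w ∈ σ.dom then (σ.map w).eval M g₀ else c w) ∈ FinSubst.Inst M σ :=
      fun c => ⟨g₀, fun w hw => if_pos hw⟩
    refine ⟨hext, ?_, ?_⟩
    · intro x hxθ hxσ
      cases ht : θ.map x with
      | func f ts =>
        exfalso
        obtain ⟨a, ha⟩ := exists_outside_aux hc hM hnt f
        obtain ⟨g, hg⟩ := hsub _ (hmk (fun _ => a))
        have h1 := hg x hxθ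
        rw [ht] at h1
        simp only [hxσ, if_neg, FOTerm.eval] at h1
        exact ha _ (by simpa [hxσ] using h1)
      | var y =>
        refine ⟨y, ?_, rfl⟩
        intro hy
        obtain ⟨z, hz, hyz⟩ := Finset.mem_biUnion.1 hy
        obtain ⟨a, b, hab⟩ := hnt
        obtain ⟨ga, hga⟩ := hsub _ (hmk (fun _ => a))
        obtain ⟨gb, hgb⟩ := hsub _ (hmk (fun _ => b))
        have hza := hga z (hext.1 hz)
        have hzb := hgb z (hext.1 hz)
        rw [hext.2 z hz] at hza hzb
        simp only [if_pos hz] at hza hzb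
        have heq : (σ.map z).eval M ga = (σ.map z).eval M gb := by
          rw [← hza, ← hzb]
        have hgy : ga y = gb y := eval_det_aux hM _ hyz heq
        have h1 := hga x hxθ
        have h2 := hgb x hxθ
        rw [ht] at h1 h2
        simp only [if_neg hxσ, FOTerm.eval] at h1 h2
        exact hab (h1.trans (hgy.trans h2.symm))
    · intro x₁ hx₁ x₂ hx₂ heq
      by_contra hne
      obtain ⟨a, b, hab⟩ := hnt
      rw [Finset.coe_sdiff, Set.mem_diff] at hx₁ hx₂
      have hx₁θ : x₁ ∈ θ.dom := hx₁.1
      have hx₁σ : x₁ ∉ σ.dom := hx₁.2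
      have hx₂θ : x₂ ∈ θ.dom := hx₂.1
      have hx₂σ : x₂ ∉ σ.dom := hx₂.2
      obtain ⟨g, hg⟩ := hsub _ (hmk (fun w => if w = x₁ then a else b))
      have h1 := hg x₁ hx₁θ
      have h2 := hg x₂ hx₂θ
      rw [heq] at h1
      simp only [if_neg hx₁σ, if_neg hx₂σ] at h1 h2
      rw [if_pos trivial] at h1
      rw [if_neg (fun h : x₂ = x₁ => hne h.symm)] at h2
      exact hab (h1.trans h2.symm)
  · rintro ⟨-, hvar, hinj⟩
    ext h
    constructor
    · rintro ⟨g, hg⟩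
      refine ⟨g, fun x hx => ?_⟩
      rw [← hext.2 x hx]
      exact hg x (hext.1 hx)
    · rintro ⟨g, hg⟩
      set g' : ℕ → M.carrier := fun y =>
        if hy : ∃ x, x ∈ θ.dom ∧ x ∉ σ.dom ∧ θ.map x = FOTerm.var y
        then h hy.choose else g y with hg'
      refine ⟨g', fun x hx => ?_⟩
      by_cases hxσ : x ∈ σ.dom
      · rw [hext.2 x hxσ, hg x hxσ]
        apply eval_congr_aux
        intro y hy
        have hyr : y ∈ σ.range := mem_range_aux hxσ hy
        have hno : ¬ ∃ x', x' ∈ θ.dom ∧ x' ∉ σ.dom ∧ θ.map x' = FOTerm.var y := by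
          rintro ⟨x', hx'θ, hx'σ, hx'm⟩
          obtain ⟨y', hy', hy'm⟩ := hvar x' hx'θ hx'σ
          rw [hx'm] at hy'm
          cases hy'm
          exact hy' hyr
        simp [hg', dif_neg hno]
      · obtain ⟨y, hyr, hty⟩ := hvar x hx hxσ
        rw [hty]
        have hex : ∃ x', x' ∈ θ.dom ∧ x' ∉ σ.dom ∧ θ.map x' = FOTerm.var y :=
          ⟨x, hx, hxσ, hty⟩
        have hchoose := hex.choose_spec
        have hcx : hex.choose = x := by
          apply hinj
          · rw [Finset.coe_sdiff, Set.mem_diff]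
            exact ⟨hchoose.1, hchoose.2.1⟩
          · rw [Finset.coe_sdiff, Set.mem_diff]
            exact ⟨hx, hxσ⟩
          · rw [hchoose.2.2, hty]
        show h x = g' y
        have hgy : g' y = h hex.choose := dif_pos hex
        rw [hgy, hcx]
end

section
/- Let σ and θ be finite substitutions and M a non-trivial model of the free equality axioms FEA(L). Then: (1) Inst_M(σ) ⊆ Inst_M(θ) if and only if σ ≼ θ; (2) Inst_M(σ) = Inst_M(θ) if and only if σ ≈ θ. -/
section StmtAux

open Classical

variable {L : FOLang}

theorem SP.eval_congr (M : FOStruc L) :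
    ∀ (t : FOTerm L) (g g' : ℕ → M.carrier),
      (∀ y ∈ t.vars, g y = g' y) → t.eval M g = t.eval M g' := by
  intro t
  induction t with
  | var x => intro g g' h; exact h x (by simp [FOTerm.vars])
  | func f ts ih =>
    intro g g' h
    simp only [FOTerm.eval]
    congr 1
    funext i
    exact ih i g g' fun y hy =>
      h y (by
        simp only [FOTerm.vars, Finset.mem_biUnion]
        exact ⟨i, Finset.mem_univ i, hy⟩)

theorem SP.eval_applyT (M : FOStruc L) (f : ℕ → FOTerm L) :
    ∀ (t : FOTerm L) (g : ℕ → M.carrier),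
      (t.applyT f).eval M g = t.eval M fun y => (f y).eval M g := by
  intro t
  induction t with
  | var x => intro g; rfl
  | func fn ts ih =>
    intro g
    simp only [FOTerm.applyT, FOTerm.eval]
    congr 1
    funext i
    exact ih i g

theorem SP.exists_avoid (M : FOStruc L) (hc : L.HasConst) (hM : IsFEA M)
    (hnt : M.Nontriv) (f : L.Func) :
    ∃ a : M.carrier, ∀ args, M.funcs f args ≠ a := by
  obtain ⟨c, hc0⟩ := hc
  obtain ⟨a, b, hab⟩ := hnt
  set args₀ : Fin (L.farity c) → M.carrier := fun i => (Fin.cast hc0 i).elim0 with hargs₀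
  by_cases hfc : f = c
  · subst hfc
    refine ⟨if M.funcs f args₀ = a then b else a, ?_⟩
    intro args
    have hargs : args = args₀ := funext fun i => (Fin.cast hc0 i).elim0
    rw [hargs]
    split_ifs with h
    · rw [h]; exact hab
    · exact h
  · exact ⟨M.funcs c args₀, fun args => hM.disj f c hfc args args₀⟩

theorem SP.separation (M : FOStruc L) (hc : L.HasConst) (hM : IsFEA M)
    (hnt : M.Nontriv) :
    ∀ s t : FOTerm L, s ≠ t → ∃ g : ℕ → M.carrier, s.eval M g ≠ t.eval M g := by
  intro s
  induction s with
  | var x =>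
    intro t hne
    cases t with
    | var y =>
      have hxy : x ≠ y := fun h => hne (by rw [h])
      obtain ⟨a, b, hab⟩ := hnt
      refine ⟨fun z => if z = x then a else b, fun h => hab ?_⟩
      have h1 : (if x = x then a else b) = (if y = x then a else b) := h
      rw [if_pos rfl, if_neg (fun hyx : y = x => hxy hyx.symm)] at h1
      exact h1
    | func f ts =>
      by_cases hx : x ∈ (FOTerm.func f ts).vars
      · obtain ⟨a0⟩ := M.inhab
        refine ⟨fun _ => a0, fun h => ?_⟩
        exact hM.occ x (FOTerm.func f ts) (fun h' => by cases h') hx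
          (fun _ => a0) h
      · obtain ⟨a, ha⟩ := SP.exists_avoid M hc hM hnt f
        refine ⟨fun _ => a, fun h => ?_⟩
        have h1 : a = M.funcs f fun i => (ts i).eval M fun _ => a := h
        exact ha _ h1.symm
  | func f ss ih =>
    intro t hne
    cases t with
    | var y =>
      by_cases hy : y ∈ (FOTerm.func f ss).vars
      · obtain ⟨a0⟩ := M.inhab
        refine ⟨fun _ => a0, fun h => ?_⟩
        exact hM.occ y (FOTerm.func f ss) (fun h' => by cases h') hy
          (fun _ => a0) h.symm
      · obtain ⟨a, ha⟩ := SP.exists_avoid M hc hM hnt f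
        refine ⟨fun _ => a, fun h => ?_⟩
        have h1 : (M.funcs f fun i => (ss i).eval M fun _ => a) = a := h
        exact ha _ h1
    | func f' ts =>
      by_cases hff : f = f'
      · subst hff
        have hst : ss ≠ ts := fun h => hne (by rw [h])
        obtain ⟨i, hi⟩ := Function.ne_iff.mp hst
        obtain ⟨g, hg⟩ := ih i (ts i) hi
        refine ⟨g, fun h => ?_⟩
        have h1 : (M.funcs f fun i => (ss i).eval M g)
            = M.funcs f fun i => (ts i).eval M g := h
        exact hg (congrFun (hM.inj f h1) i)
      · obtain ⟨a0⟩ := M.inhab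
        refine ⟨fun _ => a0, fun h => ?_⟩
        have h1 : (M.funcs f fun i => (ss i).eval M fun _ => a0)
            = M.funcs f' fun i => (ts i).eval M fun _ => a0 := h
        exact hM.disj f f' hff _ _ h1

theorem SP.indiff_eval (M : FOStruc L) (hM : IsFEA M) :
    ∀ {s t : FOTerm L} {p}, InDiff s t p →
      ∀ g₀ g, s.eval M g₀ = t.eval M g → p.1.eval M g₀ = p.2.eval M g := by
  intro s t p hd
  induction hd with
  | var x => intro g₀ g he; exact he
  | varVar h => intro g₀ g he; exact he
  | varFunc x f ts => intro g₀ g he; exact he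
  | funcVar f ss y => intro g₀ g he; exact he
  | funcFunc ss ts h => intro g₀ g he; exact he
  | func ss ts i hd ih =>
    intro g₀ g he
    simp only [FOTerm.eval] at he
    exact ih g₀ g (congrFun (hM.inj _ he) i)

theorem SP.indiff_vars :
    ∀ {s t : FOTerm L} {p}, InDiff s t p → p.2.vars ⊆ t.vars := by
  intro s t p hd
  induction hd with
  | var x => exact subset_rfl
  | varVar h => exact subset_rfl
  | varFunc x f ts => exact subset_rfl
  | funcVar f ss y => exact subset_rfl
  | funcFunc ss ts h => exact subset_rfl
  | func ss ts i hd ih =>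
    refine ih.trans ?_
    intro y hy
    simp only [FOTerm.vars, Finset.mem_biUnion]
    exact ⟨i, Finset.mem_univ i, hy⟩

theorem SP.indiff_var_right :
    ∀ {s : FOTerm L} {z : ℕ} {p}, InDiff s (.var z) p → p = (s, .var z) := by
  intro s z p hd
  cases hd with
  | var x => rfl
  | varVar h => rfl
  | funcVar f ss y => rfl

theorem SP.indiff_shape :
    ∀ {s t : FOTerm L} {p}, InDiff s t p →
      (∃ x y : ℕ, p = (.var x, .var y)) ∨
      (∃ (x : ℕ) (f : L.Func) (ts : Fin (L.farity f) → FOTerm L),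
        p = (.var x, .func f ts)) ∨
      (∃ (f : L.Func) (ss : Fin (L.farity f) → FOTerm L) (y : ℕ),
        p = (.func f ss, .var y)) ∨
      (∃ (f g : L.Func) (ss : Fin (L.farity f) → FOTerm L)
        (ts : Fin (L.farity g) → FOTerm L), f ≠ g ∧ p = (.func f ss, .func g ts)) := by
  intro s t p hd
  induction hd with
  | var x => exact Or.inl ⟨x, x, rfl⟩
  | @varVar x y h => exact Or.inl ⟨x, y, rfl⟩
  | varFunc x f ts => exact Or.inr (Or.inl ⟨x, f, ts, rfl⟩)
  | funcVar f ss y => exact Or.inr (Or.inr (Or.inl ⟨f, ss, y, rfl⟩))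
  | @funcFunc f g ss ts h => exact Or.inr (Or.inr (Or.inr ⟨f, g, ss, ts, h, rfl⟩))
  | func ss ts i hd ih => exact ih

theorem SP.indiff_base (s : FOTerm L) (y : ℕ) : InDiff s (.var y) (s, .var y) := by
  cases s with
  | var x =>
    by_cases hxy : x = y
    · subst hxy; exact InDiff.var x
    · exact InDiff.varVar hxy
  | func f ss => exact InDiff.funcVar f ss y

theorem SP.match_applyT (τm : ℕ → FOTerm L) :
    ∀ t s : FOTerm L,
      (∀ p, InDiff s t p → ∃ y : ℕ, p.2 = .var y ∧ τm y = p.1) →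
      t.applyT τm = s := by
  intro t
  induction t with
  | var z =>
    intro s h
    obtain ⟨y, hy, hv⟩ := h (s, .var z) (SP.indiff_base s z)
    have hy' : FOTerm.var z = (FOTerm.var y : FOTerm L) := hy
    injection hy' with hzy
    show τm z = s
    rw [hzy]
    exact hv
  | func f ts ih =>
    intro s h
    cases s with
    | var u =>
      obtain ⟨y, hy, -⟩ := h (.var u, .func f ts) (InDiff.varFunc u f ts)
      have hy' : FOTerm.func f ts = (FOTerm.var y : FOTerm L) := hy
      cases hy'
    | func g ss =>
      by_cases hgf : g = f
      · subst hgf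
        simp only [FOTerm.applyT]
        congr 1
        funext i
        exact ih i (ss i) fun p hp => h p (InDiff.func ss ts i hp)
      · obtain ⟨y, hy, -⟩ := h (.func g ss, .func f ts) (InDiff.funcFunc ss ts hgf)
        have hy' : FOTerm.func f ts = (FOTerm.var y : FOTerm L) := hy
        cases hy'

theorem SP.finsubst_ext {σ θ : FinSubst L} (h1 : σ.dom = θ.dom)
    (h2 : σ.map = θ.map) : σ = θ := by
  cases σ with
  | mk d m o =>
    cases θ with
    | mk d' m' o' =>
      simp only at h1 h2
      subst h1; subst h2
      rfl

theorem SP.comp_map (σ θ : FinSubst L) (x : ℕ) :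
    (σ.comp θ).map x
      = if x ∈ σ.dom then (σ.map x).applyT θ.map else .var x := rfl

/-- Regular extension of `σ` whose domain includes `D`. -/
def SP.regExtOf (σ : FinSubst L) (D : Finset ℕ) : FinSubst L where
  dom := σ.dom ∪ D
  map := fun x =>
    if x ∈ σ.dom then σ.map x
    else if x ∈ D then .var (σ.range.sup id + 1 + x) else .var x
  outside := by
    intro x hx
    have h1 : x ∉ σ.dom := fun h => hx (Finset.mem_union_left _ h)
    have h2 : x ∉ D := fun h => hx (Finset.mem_union_right _ h)
    simp [h1, h2]

theorem SP.regExtOf_dom (σ : FinSubst L) (D : Finset ℕ) :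
    (SP.regExtOf σ D).dom = σ.dom ∪ D := rfl

theorem SP.regExtOf_map (σ : FinSubst L) (D : Finset ℕ) (x : ℕ) :
    (SP.regExtOf σ D).map x
      = if x ∈ σ.dom then σ.map x
        else if x ∈ D then .var (σ.range.sup id + 1 + x) else .var x := rfl

theorem SP.regExtOf_reg (σ : FinSubst L) (D : Finset ℕ) :
    FinSubst.RegExt (SP.regExtOf σ D) σ := by
  refine ⟨⟨?_, ?_⟩, ?_, ?_⟩
  · rw [SP.regExtOf_dom]; exact Finset.subset_union_left
  · intro x hx; rw [SP.regExtOf_map, if_pos hx]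
  · intro x hx hxd
    rw [SP.regExtOf_dom] at hx
    have hxD : x ∈ D := (Finset.mem_union.mp hx).resolve_left hxd
    refine ⟨σ.range.sup id + 1 + x, ?_, by
      rw [SP.regExtOf_map, if_neg hxd, if_pos hxD]⟩
    intro hmem
    have := Finset.le_sup (f := id) hmem
    simp only [id_eq] at this
    omega
  · intro x hx y hy hxy
    simp only [SP.regExtOf_dom, Finset.coe_sdiff, Set.mem_diff,
      Finset.mem_coe, Finset.mem_union] at hx hy
    obtain ⟨hx1, hx2⟩ := hx
    obtain ⟨hy1, hy2⟩ := hy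
    have hxD : x ∈ D := hx1.resolve_left hx2
    have hyD : y ∈ D := hy1.resolve_left hy2
    rw [SP.regExtOf_map σ D x, SP.regExtOf_map σ D y, if_neg hx2, if_pos hxD,
      if_neg hy2, if_pos hyD] at hxy
    injection hxy with h
    omega

theorem SP.le_inst (M : FOStruc L) {σ θ : FinSubst L} (h : FinSubst.Le σ θ) :
    FinSubst.Inst M σ ⊆ FinSubst.Inst M θ := by
  classical
  obtain ⟨σ', θ', τ, hσ, hθ, hdom, hrange, heq⟩ := h
  intro h₀ hh
  obtain ⟨g, hg⟩ := hh
  set g' : ℕ → M.carrier := fun y =>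
    if hy : ∃ x, x ∈ σ'.dom ∧ x ∉ σ.dom ∧ σ'.map x = FOTerm.var y then h₀ hy.choose
    else g y with hg'
  have specneg : ∀ y, ¬(∃ x, x ∈ σ'.dom ∧ x ∉ σ.dom ∧ σ'.map x = FOTerm.var y) →
      g' y = g y := by
    intro y hn
    rw [hg']
    exact dif_neg hn
  have specpos : ∀ (y : ℕ)
      (hy : ∃ x, x ∈ σ'.dom ∧ x ∉ σ.dom ∧ σ'.map x = FOTerm.var y),
      g' y = h₀ hy.choose := by
    intro y hy
    rw [hg']
    exact dif_pos hy
  have key : ∀ x ∈ σ'.dom, h₀ x = (σ'.map x).eval M g' := by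
    intro x hx
    by_cases hxσ : x ∈ σ.dom
    · rw [hσ.1.2 x hxσ, hg x hxσ]
      apply SP.eval_congr
      intro y hy
      have hyr : y ∈ σ.range := Finset.mem_biUnion.mpr ⟨x, hxσ, hy⟩
      refine (specneg y ?_).symm
      rintro ⟨x', hx'1, hx'2, hx'3⟩
      obtain ⟨y', hy', hmy'⟩ := hσ.2.1 x' hx'1 hx'2
      rw [hx'3] at hmy'
      injection hmy' with hyy
      exact hy' (hyy ▸ hyr)
    · obtain ⟨y, hy, hmy⟩ := hσ.2.1 x hx hxσ
      rw [hmy]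
      show h₀ x = g' y
      have hex : ∃ x', x' ∈ σ'.dom ∧ x' ∉ σ.dom ∧ σ'.map x' = FOTerm.var y :=
        ⟨x, hx, hxσ, hmy⟩
      rw [specpos y hex]
      have hch := hex.choose_spec
      have hEq : hex.choose = x := by
        apply hσ.2.2
        · exact Finset.mem_coe.mpr (Finset.mem_sdiff.mpr ⟨hch.1, hch.2.1⟩)
        · exact Finset.mem_coe.mpr (Finset.mem_sdiff.mpr ⟨hx, hxσ⟩)
        · rw [hch.2.2, hmy]
      rw [hEq]
  refine ⟨fun y => (τ.map y).eval M g', ?_⟩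
  intro x hxθ
  have hxθ' : x ∈ θ'.dom := hθ.1.1 hxθ
  have hxσ' : x ∈ σ'.dom := by rw [hdom]; exact hxθ'
  have h1 : h₀ x = (σ'.map x).eval M g' := key x hxσ'
  have h2 : σ'.map x = (θ'.comp τ).map x := by rw [heq]
  rw [h2, SP.comp_map, if_pos hxθ', SP.eval_applyT] at h1
  rw [← hθ.1.2 x hxθ]
  exact h1

theorem SP.inst_le_aux (M : FOStruc L) (hc : L.HasConst) (hM : IsFEA M)
    (hnt : M.Nontriv) {σ θ σ' θ' : FinSubst L} (D : Finset ℕ)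
    (regσ : FinSubst.RegExt σ' σ) (regθ : FinSubst.RegExt θ' θ)
    (hσdom : σ'.dom = D) (hθdom : θ'.dom = D)
    (hsub : FinSubst.Inst M σ ⊆ FinSubst.Inst M θ) : FinSubst.Le σ θ := by
  classical
  have hDθ : ∀ {x : ℕ}, x ∈ D → x ∈ θ'.dom := fun {x} hx => by
    rw [hθdom]; exact hx
  have K : ∀ g₀ : ℕ → M.carrier, ∃ g, ∀ x ∈ θ.dom,
      (σ'.map x).eval M g₀ = (θ'.map x).eval M g := by
    intro g₀
    have hmem : (fun x => (σ'.map x).eval M g₀) ∈ FinSubst.Inst M σ :=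
      ⟨g₀, fun x hx => congrArg (FOTerm.eval M g₀) (regσ.1.2 x hx)⟩
    obtain ⟨g, hg⟩ := hsub hmem
    exact ⟨g, fun x hx =>
      (hg x hx).trans (congrArg (FOTerm.eval M g) (regθ.1.2 x hx)).symm⟩
  by_cases HC1 : ∀ x ∈ D, ∀ p, InDiff (σ'.map x) (θ'.map x) p →
      ∃ y : ℕ, p.2 = FOTerm.var y
  · by_cases HC2 : ∀ (y : ℕ) (s₁ s₂ : FOTerm L),
        (∃ x ∈ D, InDiff (σ'.map x) (θ'.map x) (s₁, .var y)) →
        (∃ x ∈ D, InDiff (σ'.map x) (θ'.map x) (s₂, .var y)) → s₁ = s₂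
    · -- positive case: build the matching substitution
      set τm : ℕ → FOTerm L := fun y =>
        if hy : ∃ s, ∃ x ∈ D, InDiff (σ'.map x) (θ'.map x) (s, .var y)
        then hy.choose else .var y with hτm
      have τspec : ∀ (y : ℕ) (s : FOTerm L),
          (∃ x ∈ D, InDiff (σ'.map x) (θ'.map x) (s, .var y)) → τm y = s := by
        intro y s hP
        have hex : ∃ s', ∃ x ∈ D, InDiff (σ'.map x) (θ'.map x) (s', .var y) :=
          ⟨s, hP⟩
        have hval : τm y = hex.choose := by rw [hτm]; exact dif_pos hex
        rw [hval]
        exact HC2 y _ s hex.choose_spec hP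
      have houtside : ∀ y ∉ θ'.range, τm y = .var y := by
        intro y hy
        have hn : ¬ ∃ s, ∃ x ∈ D, InDiff (σ'.map x) (θ'.map x) (s, .var y) := by
          rintro ⟨s, x, hx, hd⟩
          apply hy
          have hv : y ∈ (θ'.map x).vars :=
            SP.indiff_vars hd (by simp [FOTerm.vars])
          exact Finset.mem_biUnion.mpr ⟨x, hDθ hx, hv⟩
        rw [hτm]
        exact dif_neg hn
      refine ⟨σ', θ', ⟨θ'.range, τm, houtside⟩, regσ, regθ,
        hσdom.trans hθdom.symm, fun y hy => hy, ?_⟩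
      apply SP.finsubst_ext
      · exact (hσdom.trans hθdom.symm)
      · funext x
        rw [SP.comp_map]
        by_cases hx : x ∈ D
        · rw [if_pos (hDθ hx)]
          refine (SP.match_applyT τm (θ'.map x) (σ'.map x) ?_).symm
          intro p hp
          obtain ⟨y, hy⟩ := HC1 x hx p hp
          refine ⟨y, hy, ?_⟩
          apply τspec
          have hp2 : (p.1, FOTerm.var y) = p := by rw [← hy]
          exact ⟨x, hx, hp2 ▸ hp⟩
        · rw [if_neg fun h => hx (by rw [← hθdom]; exact h)]
          exact σ'.outside x fun h => hx (by rw [← hσdom]; exact h)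
    · -- functionality fails: contradiction
      exfalso
      push_neg at HC2
      obtain ⟨y, s₁, s₂, hP1, hP2, hne⟩ := HC2
      obtain ⟨x₁, hx₁, hd₁⟩ := hP1
      obtain ⟨x₂, hx₂, hd₂⟩ := hP2
      have fresh : ∀ x ∈ D, x ∉ θ.dom → ∀ s : FOTerm L,
          InDiff (σ'.map x) (θ'.map x) (s, .var y) →
          s = σ'.map x ∧ θ'.map x = .var y ∧ y ∉ θ.range := by
        intro x hx hxn s hd
        obtain ⟨z, hz, hmz⟩ := regθ.2.1 x (hDθ hx) hxn
        rw [hmz] at hd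
        have hp := SP.indiff_var_right hd
        have h1 : s = σ'.map x := congrArg Prod.fst hp
        have h2 : (FOTerm.var y : FOTerm L) = .var z := congrArg Prod.snd hp
        injection h2 with hyz
        subst hyz
        exact ⟨h1, hmz, hz⟩
      have hmemrange : ∀ x ∈ θ.dom, ∀ s : FOTerm L,
          InDiff (σ'.map x) (θ'.map x) (s, .var y) → y ∈ θ.range := by
        intro x hx s hd
        have hv : y ∈ (θ'.map x).vars :=
          SP.indiff_vars hd (by simp [FOTerm.vars])
        rw [regθ.1.2 x hx] at hv
        exact Finset.mem_biUnion.mpr ⟨x, hx, hv⟩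
      have hx₁θ : x₁ ∈ θ.dom := by
        by_contra hn1
        obtain ⟨hs₁, hm₁, hyr⟩ := fresh x₁ hx₁ hn1 s₁ hd₁
        by_cases hn2 : x₂ ∈ θ.dom
        · exact hyr (hmemrange x₂ hn2 s₂ hd₂)
        · obtain ⟨hs₂, hm₂, -⟩ := fresh x₂ hx₂ hn2 s₂ hd₂
          have hxx : x₁ = x₂ := by
            apply regθ.2.2
            · exact Finset.mem_coe.mpr (Finset.mem_sdiff.mpr ⟨hDθ hx₁, hn1⟩)
            · exact Finset.mem_coe.mpr (Finset.mem_sdiff.mpr ⟨hDθ hx₂, hn2⟩)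
            · rw [hm₁, hm₂]
          apply hne
          rw [hs₁, hs₂, hxx]
      have hx₂θ : x₂ ∈ θ.dom := by
        by_contra hn2
        obtain ⟨-, -, hyr⟩ := fresh x₂ hx₂ hn2 s₂ hd₂
        exact hyr (hmemrange x₁ hx₁θ s₁ hd₁)
      obtain ⟨g₀, hg₀⟩ := SP.separation M hc hM hnt s₁ s₂ hne
      obtain ⟨g, hg⟩ := K g₀
      have e₁ := SP.indiff_eval M hM hd₁ g₀ g (hg x₁ hx₁θ)
      have e₂ := SP.indiff_eval M hM hd₂ g₀ g (hg x₂ hx₂θ)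
      exact hg₀ (e₁.trans e₂.symm)
  · -- a clash: contradiction
    exfalso
    push_neg at HC1
    obtain ⟨x, hx, p, hd, hnp⟩ := HC1
    have hxθ : x ∈ θ.dom := by
      by_contra hxn
      obtain ⟨z, hz, hmz⟩ := regθ.2.1 x (hDθ hx) hxn
      rw [hmz] at hd
      have hp := SP.indiff_var_right hd
      exact hnp z (congrArg Prod.snd hp)
    rcases SP.indiff_shape hd with ⟨u, v, hp⟩ | ⟨u, f, ts, hp⟩ |
      ⟨f, ss, v, hp⟩ | ⟨f, g', ss, ts, hfg, hp⟩
    · exact hnp v (congrArg Prod.snd hp)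
    · subst hp
      obtain ⟨a, ha⟩ := SP.exists_avoid M hc hM hnt f
      obtain ⟨g, hg⟩ := K fun _ => a
      have e := SP.indiff_eval M hM hd (fun _ => a) g (hg x hxθ)
      have e' : a = M.funcs f fun i => (ts i).eval M g := e
      exact ha _ e'.symm
    · exact hnp v (congrArg Prod.snd hp)
    · subst hp
      obtain ⟨a0⟩ := M.inhab
      obtain ⟨g, hg⟩ := K fun _ => a0
      have e := SP.indiff_eval M hM hd (fun _ => a0) g (hg x hxθ)
      have e' : (M.funcs f fun i => (ss i).eval M fun _ => a0)
          = M.funcs g' fun i => (ts i).eval M g := e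
      exact hM.disj f g' hfg _ _ e'

theorem SP.inst_le (M : FOStruc L) (hc : L.HasConst) (hM : IsFEA M)
    (hnt : M.Nontriv) {σ θ : FinSubst L}
    (hsub : FinSubst.Inst M σ ⊆ FinSubst.Inst M θ) : FinSubst.Le σ θ := by
  classical
  have h1 : σ.dom ∪ (σ.dom ∪ θ.dom) = σ.dom ∪ θ.dom := by
    ext a; simp only [Finset.mem_union]; tauto
  have h2 : θ.dom ∪ (σ.dom ∪ θ.dom) = σ.dom ∪ θ.dom := by
    ext a; simp only [Finset.mem_union]; tauto
  exact SP.inst_le_aux M hc hM hnt (σ.dom ∪ θ.dom)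
    (SP.regExtOf_reg σ _) (SP.regExtOf_reg θ _)
    ((SP.regExtOf_dom σ _).trans h1) ((SP.regExtOf_dom θ _).trans h2) hsub

end StmtAux

/-- For finite substitutions `σ`, `θ` and a non-trivial
model `M` of `FEA(L)`: (1) `Inst_M(σ) ⊆ Inst_M(θ)` iff `σ ≼ θ`;
(2) `Inst_M(σ) = Inst_M(θ)` iff `σ ≈ θ`. -/
theorem subst_preorder_iff {L : FOLang} (hc : L.HasConst)
    (M : FOStruc L) (hM : IsFEA M) (hnt : M.Nontriv) (σ θ : FinSubst L) :
    (FinSubst.Inst M σ ⊆ FinSubst.Inst M θ ↔ FinSubst.Le σ θ) ∧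
    (FinSubst.Inst M σ = FinSubst.Inst M θ ↔ FinSubst.Equiv σ θ) := by
  have part1 : ∀ σ₁ θ₁ : FinSubst L,
      FinSubst.Inst M σ₁ ⊆ FinSubst.Inst M θ₁ ↔ FinSubst.Le σ₁ θ₁ :=
    fun σ₁ θ₁ => ⟨fun h => SP.inst_le M hc hM hnt h, fun h => SP.le_inst M h⟩
  refine ⟨part1 σ θ, ?_⟩
  rw [Set.Subset.antisymm_iff]
  exact and_congr (part1 σ θ) (part1 θ σ)
end
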